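/- arXiv:2412.18888 — 11 statements merged into one kernel-verified Lean document; each statement's English description precedes it below -/
import Mathlib

section
/- Let X and Y be nonempty metric spaces and R a correspondence between X and Y with distortion dis R. Then for all pairs (x, y), (x', y') ∈ R one has | |xx'|_u − |yy'|_u | ≤ dis R; that is, the distortion of R computed with respect to the ultrametric pseudodistances on X and Y does not exceed dis R. Consequently, half the infimum over all correspondences of the ultrametric distortion is at most d_GH(X, Y). -/
open scoped ENNReal

noncomputable section

/-- Ultrametric pseudodistance: infimum over chains from `x` to `y` of the
maximal edge length of the chain. -/
noncomputable def ultraDist {X : Type*} [MetricSpace X] (x y : X) : ℝ≥0∞ :=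
  ⨅ (n : ℕ) (f : Fin (n + 1) → X) (_ : f 0 = x) (_ : f (Fin.last n) = y),
    ⨆ i : Fin n, edist (f i.castSucc) (f i.succ)

/-- Ultrametric pseudodiameter. -/
noncomputable def ultraDiam (X : Type*) [MetricSpace X] : ℝ≥0∞ :=
  ⨆ (x : X) (y : X), ultraDist x y

/-- A correspondence between `X` and `Y`: a relation whose projections are surjective. -/
def IsCorrespondence {X Y : Type*} (R : Set (X × Y)) : Prop :=
  (∀ x : X, ∃ y : Y, (x, y) ∈ R) ∧ (∀ y : Y, ∃ x : X, (x, y) ∈ R)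

/-- Distortion of a relation. -/
noncomputable def distortion {X Y : Type*} [MetricSpace X] [MetricSpace Y]
    (R : Set (X × Y)) : ℝ≥0∞ :=
  ⨆ (p ∈ R) (q ∈ R), ENNReal.ofReal |dist p.1 q.1 - dist p.2 q.2|

/-- Gromov–Hausdorff distance: half the infimal distortion of correspondences. -/
noncomputable def ghDist (X Y : Type*) [MetricSpace X] [MetricSpace Y] : ℝ≥0∞ :=
  (⨅ (R : Set (X × Y)) (_ : IsCorrespondence R), distortion R) / 2


/-- Distortion of a relation computed with respect to the ultrametric
pseudodistances (absolute difference in `ℝ≥0∞` as the maximum of the two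
truncated subtractions). -/
noncomputable def ultraDistortion {X Y : Type*} [MetricSpace X] [MetricSpace Y]
    (R : Set (X × Y)) : ℝ≥0∞ :=
  ⨆ (p ∈ R) (q ∈ R),
    max (ultraDist p.1 q.1 - ultraDist p.2 q.2) (ultraDist p.2 q.2 - ultraDist p.1 q.1)

lemma edist_rel_aux {X Y : Type*} [MetricSpace X] [MetricSpace Y] (R : Set (X × Y))
    {p q : X × Y} (hp : p ∈ R) (hq : q ∈ R) :
    edist p.2 q.2 ≤ edist p.1 q.1 + distortion R := by
  have hd : ENNReal.ofReal |dist p.1 q.1 - dist p.2 q.2| ≤ distortion R :=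
    le_iSup_of_le p (le_iSup_of_le hp (le_iSup_of_le q (le_iSup_of_le hq le_rfl)))
  have h1 : dist p.2 q.2 ≤ dist p.1 q.1 + |dist p.1 q.1 - dist p.2 q.2| := by
    have h2 := le_abs_self (dist p.2 q.2 - dist p.1 q.1)
    rw [abs_sub_comm] at h2
    linarith
  calc edist p.2 q.2 = ENNReal.ofReal (dist p.2 q.2) := edist_dist _ _
    _ ≤ ENNReal.ofReal (dist p.1 q.1 + |dist p.1 q.1 - dist p.2 q.2|) :=
        ENNReal.ofReal_le_ofReal h1
    _ ≤ ENNReal.ofReal (dist p.1 q.1) + ENNReal.ofReal |dist p.1 q.1 - dist p.2 q.2| :=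
        ENNReal.ofReal_add_le
    _ ≤ edist p.1 q.1 + distortion R := by
        rw [edist_dist]; exact add_le_add le_rfl hd

lemma ultraDist_le_add {X Y : Type*} [MetricSpace X] [MetricSpace Y] (R : Set (X × Y))
    (hsurj : ∀ a : X, ∃ b : Y, (a, b) ∈ R)
    {x x' : X} {y y' : Y} (h : (x, y) ∈ R) (h' : (x', y') ∈ R) :
    ultraDist y y' ≤ ultraDist x x' + distortion R := by
  rw [← tsub_le_iff_right]
  conv_rhs => rw [ultraDist]
  simp only [le_iInf_iff]
  intro n f h0 h1
  rw [tsub_le_iff_right]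
  classical
  set F : Fin (n + 1) → Y := fun i => if i = 0 then y else (hsurj (f i)).choose with hF
  have hFmem : ∀ i, (f i, F i) ∈ R := by
    intro i
    by_cases hi : i = 0
    · subst hi; simp only [hF, if_pos rfl, h0]; exact h
    · simp only [hF, if_neg hi]; exact (hsurj (f i)).choose_spec
  set g : Fin (n + 2) → Y := fun i => if hi : (i : ℕ) < n + 1 then F ⟨i, hi⟩ else y' with hg
  have hg0 : g 0 = y := by simp [hg, hF]
  have hgl : g (Fin.last (n + 1)) = y' := by simp [hg]
  have step : ultraDist y y' ≤ ⨆ i : Fin (n + 1), edist (g i.castSucc) (g i.succ) := by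
    rw [ultraDist]
    exact iInf_le_of_le (n + 1) (iInf_le_of_le g (iInf_le_of_le hg0 (iInf_le_of_le hgl le_rfl)))
  refine step.trans (iSup_le fun i => ?_)
  by_cases hi : (i : ℕ) < n
  · have hc : ((i.castSucc : Fin (n + 2)) : ℕ) < n + 1 := Nat.lt_succ_of_lt hi
    have hs : ((i.succ : Fin (n + 2)) : ℕ) < n + 1 := by
      simp only [Fin.val_succ]; exact Nat.succ_lt_succ hi
    have e1 : g i.castSucc = F ⟨i, Nat.lt_succ_of_lt hi⟩ := by
      rw [hg]; exact dif_pos hc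
    have e2 : g i.succ = F ⟨(i : ℕ) + 1, Nat.succ_lt_succ hi⟩ := by
      rw [hg]; exact dif_pos hs
    rw [e1, e2]
    set j : Fin n := ⟨i, hi⟩ with hj
    have hedge : edist (F ⟨i, Nat.lt_succ_of_lt hi⟩) (F ⟨(i : ℕ) + 1, Nat.succ_lt_succ hi⟩)
        ≤ edist (f j.castSucc) (f j.succ) + distortion R := by
      have hcc : (⟨(i : ℕ), Nat.lt_succ_of_lt hi⟩ : Fin (n + 1)) = j.castSucc := rfl
      have hss : (⟨(i : ℕ) + 1, Nat.succ_lt_succ hi⟩ : Fin (n + 1)) = j.succ := rfl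
      rw [hcc, hss]
      exact edist_rel_aux R (hFmem j.castSucc) (hFmem j.succ)
    exact hedge.trans (add_le_add (le_iSup (fun k : Fin n =>
      edist (f k.castSucc) (f k.succ)) j) le_rfl)
  · have hin : (i : ℕ) = n := Nat.le_antisymm (Nat.lt_succ_iff.mp i.isLt) (Nat.le_of_not_lt hi)
    have hc : ((i.castSucc : Fin (n + 2)) : ℕ) < n + 1 := by
      simp only [Fin.coe_castSucc, hin]; exact Nat.lt_succ_self n
    have e1 : g i.castSucc = F ⟨i, i.isLt⟩ := by
      rw [hg]; exact dif_pos hc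
    have e2 : g i.succ = y' := by
      rw [hg]
      refine dif_neg ?_
      simp only [Fin.val_succ, hin]
      omega
    rw [e1, e2]
    have hlast : (⟨(i : ℕ), i.isLt⟩ : Fin (n + 1)) = Fin.last n :=
      Fin.ext (by simp [hin])
    have hmem : (f (Fin.last n), F (Fin.last n)) ∈ R := hFmem _
    rw [h1] at hmem
    have := edist_rel_aux R (p := (x', F (Fin.last n))) (q := (x', y')) hmem h'
    simp only [edist_self, zero_add] at this
    rw [hlast]
    exact le_trans this (le_add_left le_rfl)

lemma distortion_swap_le {X Y : Type*} [MetricSpace X] [MetricSpace Y] (R : Set (X × Y)) :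
    distortion (Prod.swap ⁻¹' R) ≤ distortion R := by
  refine iSup_le fun p => iSup_le fun hp => iSup_le fun q => iSup_le fun hq => ?_
  have he : ENNReal.ofReal |dist p.1 q.1 - dist p.2 q.2|
      = ENNReal.ofReal |dist (Prod.swap p).1 (Prod.swap q).1 - dist (Prod.swap p).2 (Prod.swap q).2| := by
    simp [Prod.swap, abs_sub_comm]
  rw [he]
  exact le_iSup_of_le (Prod.swap p) (le_iSup_of_le hp
    (le_iSup_of_le (Prod.swap q) (le_iSup_of_le hq le_rfl)))

lemma main_ineq {X Y : Type*} [MetricSpace X] [MetricSpace Y]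
    (R : Set (X × Y)) (hR : IsCorrespondence R) :
    ∀ x x' y y', (x, y) ∈ R → (x', y') ∈ R →
      max (ultraDist x x' - ultraDist y y') (ultraDist y y' - ultraDist x x')
        ≤ distortion R := by
  intro x x' y y' hx hx'
  refine max_le ?_ ?_
  · rw [tsub_le_iff_left]
    have hsurj : ∀ b : Y, ∃ a : X, (b, a) ∈ Prod.swap ⁻¹' R := fun b =>
      (hR.2 b).imp fun a ha => ha
    have := ultraDist_le_add (Prod.swap ⁻¹' R) hsurj
      (show (y, x) ∈ Prod.swap ⁻¹' R from hx) (show (y', x') ∈ Prod.swap ⁻¹' R from hx')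
    exact this.trans (add_le_add le_rfl (distortion_swap_le R))
  · rw [tsub_le_iff_left]
    exact ultraDist_le_add R hR.1 hx hx'

/-- for a correspondence `R` between nonempty metric spaces, the
ultrametric pseudodistances of related pairs differ by at most `dis R`, and half
the infimal ultrametric distortion is at most the Gromov–Hausdorff distance. -/
theorem ultraDistortion_le_distortion {X Y : Type*} [MetricSpace X] [MetricSpace Y]
    [Nonempty X] [Nonempty Y] (R : Set (X × Y)) (hR : IsCorrespondence R) :
    (∀ x x' y y', (x, y) ∈ R → (x', y') ∈ R →
      max (ultraDist x x' - ultraDist y y') (ultraDist y y' - ultraDist x x')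
        ≤ distortion R) ∧
    (⨅ (S : Set (X × Y)) (_ : IsCorrespondence S), ultraDistortion S) / 2 ≤ ghDist X Y := by
  constructor
  · exact main_ineq R hR
  · refine ENNReal.div_le_div_right (iInf_mono fun S => iInf_mono fun hS => ?_) 2
    refine iSup_le fun p => iSup_le fun hp => iSup_le fun q => iSup_le fun hq => ?_
    exact main_ineq S hS p.1 q.1 p.2 q.2 (by simpa using hp) (by simpa using hq)

end
end

section
/- Let X and Y be nonempty subsets of a metric space Z whose closures in Z coincide. Then the ultrametric pseudodiameters of X and of Y (computed in the induced metrics) are equal: diam_u X = diam_u Y. -/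
open scoped ENNReal

noncomputable section

/-! For `r > 0`, `ultraDist x y < r` holds exactly when `x` and `y` are joined by a chain whose
steps are all shorter than `r`. Replacing every point of such a chain in `Y` by a point of `X`
less than `δ` away lengthens each step by less than `2δ`; hence
`ultraDiam X ≤ ultraDiam Y + 2 d_H(X, Y)`, and sets with the same closure are at
Hausdorff distance `0`. -/

open Relation Metric

section

variable {X : Type*} [MetricSpace X]

theorem ultraDist_le_iSup_edist {n : ℕ} (f : Fin (n + 1) → X) :
    ultraDist (f 0) (f (Fin.last n)) ≤ ⨆ i : Fin n, edist (f i.castSucc) (f i.succ) :=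
  iInf_le_of_le n <| iInf_le_of_le f <| iInf_le_of_le rfl <| iInf_le _ rfl

theorem ultraDist_le_max_edist (x y z : X) :
    ultraDist x z ≤ max (ultraDist x y) (edist y z) := by
  refine le_of_forall_gt fun r hr => ?_
  obtain ⟨hxy, hyz⟩ := max_lt_iff.1 hr
  simp only [ultraDist, iInf_lt_iff] at hxy
  obtain ⟨n, f, rfl, rfl, hf⟩ := hxy
  set g : Fin (n + 2) → X := Fin.snoc f z with hg
  have hedges : ∀ i : Fin (n + 1), edist (g i.castSucc) (g i.succ) ≤
      max (⨆ i : Fin n, edist (f i.castSucc) (f i.succ)) (edist (f (Fin.last n)) z) := by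
    intro i
    induction i using Fin.lastCases with
    | last => simp [hg]
    | cast i =>
      rw [hg, Fin.succ_castSucc, Fin.snoc_castSucc, Fin.snoc_castSucc]
      exact le_max_of_le_left (le_iSup (fun i : Fin n => edist (f i.castSucc) (f i.succ)) i)
  calc ultraDist (f 0) z = ultraDist (g 0) (g (Fin.last (n + 1))) := by simp [hg]
    _ ≤ _ := (ultraDist_le_iSup_edist g).trans (iSup_le hedges)
    _ < r := max_lt hf hyz

theorem ultraDist_self (x : X) : ultraDist x x = 0 :=
  le_antisymm (by simpa using ultraDist_le_iSup_edist fun _ : Fin 1 => x) bot_le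

theorem reflTransGen_of_ultraDist_lt {x y : X} {r : ℝ≥0∞} (h : ultraDist x y < r) :
    ReflTransGen (fun a b : X => edist a b < r) x y := by
  simp only [ultraDist, iInf_lt_iff] at h
  obtain ⟨n, f, rfl, rfl, hf⟩ := h
  suffices ∀ i, ReflTransGen (fun a b : X => edist a b < r) (f 0) (f i) from this _
  intro i
  induction i using Fin.induction with
  | zero => exact .refl
  | succ i ih =>
    exact ih.tail ((le_iSup (fun i : Fin n => edist (f i.castSucc) (f i.succ)) i).trans_lt hf)

theorem ultraDist_lt_of_reflTransGen {x y : X} {r : ℝ≥0∞} (hr : 0 < r)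
    (h : ReflTransGen (fun a b : X => edist a b < r) x y) : ultraDist x y < r := by
  induction h with
  | refl => rwa [ultraDist_self]
  | tail _ hbc ih => exact (ultraDist_le_max_edist _ _ _).trans_lt (max_lt ih hbc)

theorem ultraDist_le_ultraDiam (x y : X) : ultraDist x y ≤ ultraDiam X :=
  le_iSup₂ (f := fun x y : X => ultraDist x y) x y

end

section

variable {Z : Type*} [MetricSpace Z]

theorem ultraDist_lt_of_hausdorffEDist_lt {X Y : Set Z} {s δ : ℝ≥0∞} (hs : ultraDiam Y < s)
    (hδ : hausdorffEDist X Y < δ) (x y : X) : ultraDist x y < δ + s + δ := by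
  have hXY (a : X) : ∃ b : Y, edist (a : Z) b < δ := by
    obtain ⟨b, hb, hab⟩ := exists_edist_lt_of_hausdorffEDist_lt a.2 hδ
    exact ⟨⟨b, hb⟩, hab⟩
  have hYX (b : Y) : ∃ a : X, edist (a : Z) b < δ := by
    rw [hausdorffEDist_comm] at hδ
    obtain ⟨a, ha, hba⟩ := exists_edist_lt_of_hausdorffEDist_lt b.2 hδ
    exact ⟨⟨a, ha⟩, by rwa [edist_comm]⟩
  choose φ hφ using hYX
  have hclose {a a' : X} {b b' : Y} (hab : edist (a : Z) b < δ) (hbb' : edist b b' < s)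
      (ha'b' : edist (a' : Z) b' < δ) : edist a a' < δ + s + δ :=
    calc edist a a' ≤ edist (a : Z) b + edist (b : Z) b' + edist (b' : Z) a' :=
          edist_triangle4 _ _ _ _
      _ < δ + s + δ := ENNReal.add_lt_add (ENNReal.add_lt_add hab hbb') (by rwa [edist_comm])
  have hs0 : 0 < s := pos_of_gt hs
  have hself (b : Y) : edist b b < s := by rwa [edist_self]
  obtain ⟨x', hx'⟩ := hXY x
  obtain ⟨y', hy'⟩ := hXY y
  have hchain : ReflTransGen (fun a a' : X => edist a a' < δ + s + δ) (φ x') (φ y') :=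
    ReflTransGen.lift φ (fun b b' hbb' => hclose (hφ b) hbb' (hφ b')) _ _
      (reflTransGen_of_ultraDist_lt ((ultraDist_le_ultraDiam x' y').trans_lt hs))
  refine ultraDist_lt_of_reflTransGen (by positivity) ?_
  exact .head (hclose hx' (hself x') (hφ x'))
    (hchain.tail (hclose (hφ y') (hself y') hy'))

theorem ultraDiam_le_add_two_mul_hausdorffEDist (X Y : Set Z) :
    ultraDiam X ≤ ultraDiam Y + 2 * hausdorffEDist X Y := by
  refine ENNReal.le_of_forall_pos_le_add fun ε hε hfin => ?_
  obtain ⟨e, he, rfl⟩ : ∃ e : NNReal, 0 < e ∧ ε = e + e + e := ⟨ε / 3, by positivity, by ring⟩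
  have he' : (e : ℝ≥0∞) ≠ 0 := by simpa using he.ne'
  have hY : ultraDiam Y ≠ ∞ := fun h => by simp [h] at hfin
  have hH : hausdorffEDist X Y ≠ ∞ := fun h => by simp [h] at hfin
  refine iSup₂_le fun x y => (ultraDist_lt_of_hausdorffEDist_lt
    (ENNReal.lt_add_right hY he') (ENNReal.lt_add_right hH he') x y).le.trans_eq ?_
  push_cast
  ring

end

theorem ultraDiam_eq_of_closure_eq_general {Z : Type*} [MetricSpace Z] (X Y : Set Z)
    (h : closure X = closure Y) :
    ultraDiam X = ultraDiam Y := by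
  have hXY : hausdorffEDist X Y = 0 := hausdorffEDist_zero_iff_closure_eq_closure.2 h
  apply le_antisymm
  · simpa [hXY] using ultraDiam_le_add_two_mul_hausdorffEDist X Y
  · simpa [hausdorffEDist_comm, hXY] using ultraDiam_le_add_two_mul_hausdorffEDist Y X

/-- nonempty subsets of a metric space with the same closure have
equal ultrametric pseudodiameters (in the induced metrics). -/
theorem ultraDiam_eq_of_closure_eq {Z : Type*} [MetricSpace Z] (X Y : Set Z)
    (hX : X.Nonempty) (hY : Y.Nonempty) (h : closure X = closure Y) :
    ultraDiam X = ultraDiam Y :=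
  ultraDiam_eq_of_closure_eq_general X Y h

end
end

section
/- Let X be a nonempty metric space and t ≥ 0. Then d_GH(X, D_t(X)) ≤ t/2, where D_t(X) is regarded as a metric space with the metric induced from C_b(X). -/
open scoped ENNReal

noncomputable section

/-- The Kuratowski embedding `x ↦ d(x,·) − d(x₀,·)` into the Banach space of
bounded continuous real functions on `X`. -/
noncomputable def kuratowskiMap {X : Type*} [MetricSpace X] (x₀ : X) (x : X) :
    BoundedContinuousFunction X ℝ :=
  BoundedContinuousFunction.mkOfBound
    ⟨fun y => dist x y - dist x₀ y, by fun_prop⟩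
    (2 * dist x x₀)
    (fun y y' => by
      have h1 : |dist x y - dist x₀ y| ≤ dist x x₀ := abs_dist_sub_le x x₀ y
      have h2 : |dist x y' - dist x₀ y'| ≤ dist x x₀ := abs_dist_sub_le x x₀ y'
      have h3 : |dist x y - dist x₀ y - (dist x y' - dist x₀ y')|
          ≤ |dist x y - dist x₀ y| + |dist x y' - dist x₀ y'| := abs_sub _ _
      simp only [ContinuousMap.coe_mk, Real.dist_eq]
      linarith)

/-- The set `D_t(X)`: the image of the Kuratowski embedding together with all
segments joining images of points at distance at most `t`. -/
noncomputable def Dset {X : Type*} [MetricSpace X] (x₀ : X) (t : ℝ) :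
    Set (BoundedContinuousFunction X ℝ) :=
  Set.range (kuratowskiMap x₀) ∪
    ⋃ (p : X × X) (_ : dist p.1 p.2 ≤ t),
      segment ℝ (kuratowskiMap x₀ p.1) (kuratowskiMap x₀ p.2)

lemma kur_apply {X : Type*} [MetricSpace X] (x₀ x y : X) :
    kuratowskiMap x₀ x y = dist x y - dist x₀ y := rfl

lemma kur_dist {X : Type*} [MetricSpace X] (x₀ x x' : X) :
    dist (kuratowskiMap x₀ x) (kuratowskiMap x₀ x') = dist x x' := by
  apply le_antisymm
  · refine (BoundedContinuousFunction.dist_le dist_nonneg).2 fun y => ?_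
    rw [kur_apply, kur_apply, Real.dist_eq]
    calc |dist x y - dist x₀ y - (dist x' y - dist x₀ y)| = |dist x y - dist x' y| := by
          ring_nf
    _ ≤ dist x x' := abs_dist_sub_le x x' y
  · have := BoundedContinuousFunction.dist_coe_le_dist (f := kuratowskiMap x₀ x)
      (g := kuratowskiMap x₀ x') x'
    rw [kur_apply, kur_apply, Real.dist_eq, dist_self] at this
    have e : dist x x' - dist x₀ x' - (0 - dist x₀ x') = dist x x' := by ring
    rwa [e, abs_of_nonneg dist_nonneg] at this

/-- for `t ≥ 0`, the Gromov–Hausdorff distance from `X` to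
`D_t(X)` (with the metric induced from `C_b(X)`) is at most `t/2`. -/
theorem ghDist_Dset_le {X : Type*} [MetricSpace X] [Nonempty X] (x₀ : X) (t : ℝ)
    (ht : 0 ≤ t) :
    ghDist X (Dset x₀ t) ≤ ENNReal.ofReal (t / 2) := by
  set R : Set (X × ↥(Dset x₀ t)) :=
    {p | dist (kuratowskiMap x₀ p.1) (p.2 : BoundedContinuousFunction X ℝ) ≤ t / 2} with hR
  have hcorr : IsCorrespondence R := by
    constructor
    · intro x
      refine ⟨⟨kuratowskiMap x₀ x, Or.inl ⟨x, rfl⟩⟩, ?_⟩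
      simp only [hR, Set.mem_setOf_eq, dist_self]
      linarith
    · rintro ⟨f, hf | hf⟩
      · obtain ⟨x, rfl⟩ := hf
        exact ⟨x, by simp [hR]; linarith⟩
      · simp only [Set.mem_iUnion] at hf
        obtain ⟨⟨a, b⟩, hab, hseg⟩ := hf
        have hsum := dist_add_dist_of_mem_segment hseg
        rw [kur_dist] at hsum
        by_cases h : dist (kuratowskiMap x₀ a) f ≤ t / 2
        · exact ⟨a, h⟩
        · refine ⟨b, ?_⟩
          simp only [hR, Set.mem_setOf_eq]
          rw [dist_comm]
          push_neg at h
          simp only at hab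
          linarith
  have hdis : distortion R ≤ ENNReal.ofReal t := by
    refine iSup₂_le fun p hp => iSup₂_le fun q hq => ENNReal.ofReal_le_ofReal ?_
    have h1 : dist p.1 q.1 = dist (kuratowskiMap x₀ p.1) (kuratowskiMap x₀ q.1) :=
      (kur_dist x₀ p.1 q.1).symm
    have h2 : dist p.2 q.2 =
        dist (p.2 : BoundedContinuousFunction X ℝ) (q.2 : BoundedContinuousFunction X ℝ) :=
      Subtype.dist_eq p.2 q.2
    have h3 := dist_dist_dist_le (kuratowskiMap x₀ p.1) (kuratowskiMap x₀ q.1)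
      (p.2 : BoundedContinuousFunction X ℝ) (q.2 : BoundedContinuousFunction X ℝ)
    rw [Real.dist_eq] at h3
    have hp' : dist (kuratowskiMap x₀ p.1) (p.2 : BoundedContinuousFunction X ℝ) ≤ t / 2 := hp
    have hq' : dist (kuratowskiMap x₀ q.1) (q.2 : BoundedContinuousFunction X ℝ) ≤ t / 2 := hq
    rw [h1, h2]
    calc |dist (kuratowskiMap x₀ p.1) (kuratowskiMap x₀ q.1) -
        dist (p.2 : BoundedContinuousFunction X ℝ) (q.2 : BoundedContinuousFunction X ℝ)| ≤
        t / 2 + t / 2 := by linarith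
      _ = t := by ring
  have hA : ghDist X (Dset x₀ t) ≤ distortion R / 2 :=
    ENNReal.div_le_div_right (iInf₂_le R hcorr) 2
  have hB : distortion R / 2 ≤ ENNReal.ofReal t / 2 := ENNReal.div_le_div_right hdis 2
  have hC : ENNReal.ofReal t / 2 = ENNReal.ofReal (t / 2) := by
    rw [ENNReal.ofReal_div_of_pos two_pos]
    norm_num
  rw [← hC]
  exact le_trans hA hB

end
end

section
/- Let X be a proper geodesic metric space, and let A and B be nonempty closed subsets of X with d = d_H(A, B) < ∞. For each t ∈ [0, d] set C_t = B_t(A) ∩ B_{d−t}(B). Then C_t is nonempty for every t ∈ [0, d]. -/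
open scoped ENNReal

noncomputable section

/-- A metric space is geodesic if every two points are joined by an isometric
(shortest) path parameterized by `[0, dist x y]`. -/
def IsGeodesicSpace (X : Type*) [MetricSpace X] : Prop :=
  ∀ x y : X, ∃ γ : ℝ → X, γ 0 = x ∧ γ (dist x y) = y ∧
    ∀ s t : ℝ, s ∈ Set.Icc (0 : ℝ) (dist x y) → t ∈ Set.Icc (0 : ℝ) (dist x y) →
      dist (γ s) (γ t) = |s - t|

/-- in a proper geodesic space, for closed nonempty `A`, `B` at
finite Hausdorff distance `d`, the sets `C_t = B_t(A) ∩ B_{d−t}(B)` are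
nonempty for all `t ∈ [0, d]`. -/
theorem canonical_interpolation_nonempty {X : Type*} [MetricSpace X] [ProperSpace X]
    (hgeo : IsGeodesicSpace X) (A B : Set X) (hA : A.Nonempty) (hB : B.Nonempty)
    (hAc : IsClosed A) (hBc : IsClosed B)
    (hfin : EMetric.hausdorffEdist A B ≠ ⊤)
    (d : ℝ) (hd : d = (EMetric.hausdorffEdist A B).toReal)
    (t : ℝ) (ht : t ∈ Set.Icc (0 : ℝ) d) :
    (Metric.cthickening t A ∩ Metric.cthickening (d - t) B).Nonempty := by
  obtain ⟨a, ha⟩ := hA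
  obtain ⟨b, hb, hab⟩ := hBc.exists_infDist_eq_dist hB a
  have hinf : Metric.infDist a B ≤ d := by
    rw [hd, Metric.infDist]
    exact ENNReal.toReal_mono hfin (EMetric.infEdist_le_hausdorffEdist_of_mem ha)
  have hdab : dist a b ≤ d := hab ▸ hinf
  obtain ⟨γ, hγ0, hγ1, hγ⟩ := hgeo a b
  set s : ℝ := min t (dist a b) with hs
  have hs0 : 0 ≤ s := le_min ht.1 dist_nonneg
  have hsmem : s ∈ Set.Icc (0 : ℝ) (dist a b) := ⟨hs0, min_le_right _ _⟩
  have h0mem : (0 : ℝ) ∈ Set.Icc (0 : ℝ) (dist a b) := ⟨le_refl _, dist_nonneg⟩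
  have h1mem : dist a b ∈ Set.Icc (0 : ℝ) (dist a b) := ⟨dist_nonneg, le_refl _⟩
  refine ⟨γ s, ?_, ?_⟩
  · refine Metric.mem_cthickening_of_dist_le (γ s) a t A ha ?_
    have := hγ s 0 hsmem h0mem
    rw [hγ0] at this
    rw [this, sub_zero, abs_of_nonneg hs0]
    exact min_le_left _ _
  · refine Metric.mem_cthickening_of_dist_le (γ s) b (d - t) B hb ?_
    have := hγ s (dist a b) hsmem h1mem
    rw [hγ1] at this
    rw [this, abs_of_nonpos (by linarith [min_le_right t (dist a b)] : s - dist a b ≤ 0)]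
    rcases min_le_iff.mp (le_refl s) with h | h
    · cases le_total t (dist a b) with
      | inl hle => have : s = t := min_eq_left hle; linarith
      | inr hle => have : s = dist a b := min_eq_right hle; nlinarith [ht.2]
    · cases le_total t (dist a b) with
      | inl hle => have : s = t := min_eq_left hle; linarith
      | inr hle => have : s = dist a b := min_eq_right hle; nlinarith [ht.2]

end
end

section
/- Let X be a proper geodesic metric space, and let A and B be nonempty closed subsets of X with d = d_H(A, B) < ∞. For each t ∈ [0, d] set C_t = B_t(A) ∩ B_{d−t}(B). Then for all 0 ≤ t ≤ s ≤ d one has d_H(C_t, C_s) ≤ s − t. -/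
/-!
Walk from a point of `C_t` a distance `s - t` towards a nearest point of `closure B` (along a
geodesic, or all the way if that point is nearer). The distance to `B` drops by `s - t` and the
distance to `A` grows by at most `s - t`, so the endpoint lies in `C_s`. Walking from `C_s`
towards `A` gives the other half of the Hausdorff bound. Properness provides the nearest
points.
-/

open scoped ENNReal

noncomputable section

theorem IsGeodesicSpace.exists_dist_eq_of_le {X : Type*} [MetricSpace X]
    (hgeo : IsGeodesicSpace X) {x b : X} {δ : ℝ} (hδ : 0 ≤ δ) (hδb : δ ≤ dist x b) :
    ∃ y, dist x y = δ ∧ dist y b = dist x b - δ := by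
  obtain ⟨γ, hγ0, hγb, hγ⟩ := hgeo x b
  refine ⟨γ δ, ?_, ?_⟩
  · rw [← hγ0, hγ 0 δ ⟨le_rfl, dist_nonneg⟩ ⟨hδ, hδb⟩, zero_sub, abs_neg, abs_of_nonneg hδ]
  · rw [← hγb, hγ δ _ ⟨hδ, hδb⟩ ⟨dist_nonneg, le_rfl⟩, hγb, abs_sub_comm,
      abs_of_nonneg (sub_nonneg.2 hδb)]

/-- For `r ≤ δ` the target `cthickening (r - δ) S` is `closure S`. -/
theorem IsGeodesicSpace.exists_dist_le_mem_cthickening_sub {X : Type*} [MetricSpace X]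
    [ProperSpace X] (hgeo : IsGeodesicSpace X) {S : Set X} {x : X} {r δ : ℝ} (hr : 0 ≤ r)
    (hδ : 0 ≤ δ) (hx : x ∈ Metric.cthickening r S) :
    ∃ y, dist x y ≤ δ ∧ y ∈ Metric.cthickening (r - δ) S := by
  rw [Metric.cthickening_eq_biUnion_closedBall S hr] at hx
  obtain ⟨b, hbS, hxb⟩ := Set.mem_iUnion₂.1 hx
  rw [Metric.mem_closedBall] at hxb
  rcases le_or_gt (dist x b) δ with hbδ | hδb
  · exact ⟨b, hbδ, Metric.closure_subset_cthickening _ _ hbS⟩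
  · obtain ⟨y, hxy, hyb⟩ := hgeo.exists_dist_eq_of_le hδ hδb.le
    refine ⟨y, hxy.le, ?_⟩
    rw [← Metric.cthickening_closure]
    exact Metric.mem_cthickening_of_dist_le y b _ _ hbS (by linarith)

theorem IsGeodesicSpace.exists_dist_le_mem_cthickening_inter {X : Type*} [MetricSpace X]
    [ProperSpace X] (hgeo : IsGeodesicSpace X) {A B : Set X} {x : X} {a b δ : ℝ} (ha : 0 ≤ a)
    (hb : 0 ≤ b) (hδ : 0 ≤ δ) (hx : x ∈ Metric.cthickening a A ∩ Metric.cthickening b B) :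
    ∃ y, dist x y ≤ δ ∧ y ∈ Metric.cthickening (a + δ) A ∩ Metric.cthickening (b - δ) B := by
  obtain ⟨y, hxy, hyB⟩ := hgeo.exists_dist_le_mem_cthickening_sub hb hδ hx.2
  have hyA : y ∈ Metric.cthickening δ (Metric.cthickening a A) :=
    Metric.mem_cthickening_of_dist_le y x δ _ hx.1 (by rwa [dist_comm])
  exact ⟨y, hxy, add_comm δ a ▸ Metric.cthickening_cthickening_subset hδ ha A hyA, hyB⟩

theorem canonical_interpolation_hausdorff_le_general {X : Type*} [MetricSpace X] [ProperSpace X]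
    (hgeo : IsGeodesicSpace X) (A B : Set X) (d : ℝ)
    (t s : ℝ) (h0 : 0 ≤ t) (hts : t ≤ s) (hsd : s ≤ d) :
    EMetric.hausdorffEdist
        (Metric.cthickening t A ∩ Metric.cthickening (d - t) B)
        (Metric.cthickening s A ∩ Metric.cthickening (d - s) B)
      ≤ ENNReal.ofReal (s - t) := by
  have hst : 0 ≤ s - t := sub_nonneg.2 hts
  apply Metric.hausdorffEDist_le_of_mem_edist
  · intro x hx
    obtain ⟨y, hxy, hy⟩ :=
      hgeo.exists_dist_le_mem_cthickening_inter h0 (by linarith) hst hx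
    refine ⟨y, ?_, edist_dist x y ▸ ENNReal.ofReal_le_ofReal hxy⟩
    rwa [add_sub_cancel, sub_sub_sub_cancel_right] at hy
  -- Points of `C_s` are handled by the same lemma with `A` and `B` exchanged.
  · intro y hy
    obtain ⟨x, hyx, hx⟩ :=
      hgeo.exists_dist_le_mem_cthickening_inter (sub_nonneg.2 hsd) (h0.trans hts) hst hy.symm
    refine ⟨x, ?_, edist_dist y x ▸ ENNReal.ofReal_le_ofReal hyx⟩
    rwa [sub_add_sub_cancel, sub_sub_cancel, Set.inter_comm] at hx

/-- in a proper geodesic space, for closed nonempty `A`, `B` at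
finite Hausdorff distance `d` and `C_t = B_t(A) ∩ B_{d−t}(B)`, one has
`d_H(C_t, C_s) ≤ s − t` for all `0 ≤ t ≤ s ≤ d`. -/
theorem canonical_interpolation_hausdorff_le {X : Type*} [MetricSpace X] [ProperSpace X]
    (hgeo : IsGeodesicSpace X) (A B : Set X) (hA : A.Nonempty) (hB : B.Nonempty)
    (hAc : IsClosed A) (hBc : IsClosed B)
    (hfin : EMetric.hausdorffEdist A B ≠ ⊤)
    (d : ℝ) (hd : d = (EMetric.hausdorffEdist A B).toReal)
    (t s : ℝ) (h0 : 0 ≤ t) (hts : t ≤ s) (hsd : s ≤ d) :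
    EMetric.hausdorffEdist
        (Metric.cthickening t A ∩ Metric.cthickening (d - t) B)
        (Metric.cthickening s A ∩ Metric.cthickening (d - s) B)
      ≤ ENNReal.ofReal (s - t) :=
  canonical_interpolation_hausdorff_le_general hgeo A B d t s h0 hts hsd

end
end

section
/- Let X be a proper geodesic metric space, and let A and B be nonempty closed subsets of X with d = d_H(A, B) < ∞. For each t ∈ [0, d] set C_t = B_t(A) ∩ B_{d−t}(B). Then C_0 = A, C_d = B, and for all 0 ≤ t ≤ s ≤ d one has d_H(C_t, C_s) = s − t; in particular, t ↦ C_t is a shortest geodesic in the space of nonempty closed subsets of X with the Hausdorff metric, whose length equals the distance d between its endpoints. -/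
open scoped ENNReal

noncomputable section

/-!
Moving a point of `C_t` a distance `s - t` along a geodesic towards a nearest point of `B` lands
in `C_s`, and symmetrically from `C_s` towards `A` into `C_t`: in a geodesic space
`cthickening (δ + r) S` is the `r`-thickening of `cthickening δ S`. Hence `t ↦ C_t` is
`1`-Lipschitz for the Hausdorff distance, and a `1`-Lipschitz curve on `[0, d]` whose endpoints
`C_0 = A`, `C_d = B` are at distance `d` cannot shorten any subinterval, by the triangle
inequality.
-/

open Metric

theorem subset_cthickening_of_hausdorffEDist_le {X : Type*} [PseudoEMetricSpace X]
    {A B : Set X} {d : ℝ} (h : hausdorffEDist A B ≤ ENNReal.ofReal d) : A ⊆ cthickening d B :=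
  fun _ hx => (infEDist_le_hausdorffEDist_of_mem hx).trans h

namespace IsGeodesicSpace

variable {X : Type*} [MetricSpace X]

theorem exists_dist_eq_sub (hgeo : IsGeodesicSpace X) (x y : X) {r : ℝ} (hr₀ : 0 ≤ r)
    (hr : r ≤ dist x y) : ∃ z, dist x z = r ∧ dist z y = dist x y - r := by
  obtain ⟨γ, hγ₀, hγ₁, hγ⟩ := hgeo x y
  refine ⟨γ r, ?_, ?_⟩
  · rw [← hγ₀, hγ 0 r ⟨le_rfl, dist_nonneg⟩ ⟨hr₀, hr⟩, zero_sub, abs_neg, abs_of_nonneg hr₀]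
  · rw [← hγ₁, hγ r (dist x y) ⟨hr₀, hr⟩ ⟨dist_nonneg, le_rfl⟩, hγ₁,
      abs_of_nonpos (sub_nonpos.2 hr), neg_sub]

/-- The converse of `Metric.cthickening_cthickening_subset`, in pointwise form. -/
theorem exists_mem_cthickening_dist_le [ProperSpace X] (hgeo : IsGeodesicSpace X) {S : Set X}
    {δ r : ℝ} (hδ : 0 ≤ δ) (hr : 0 ≤ r) {x : X} (hx : x ∈ cthickening (δ + r) S) :
    ∃ z ∈ cthickening δ S, dist x z ≤ r := by
  rw [cthickening_eq_biUnion_closedBall S (add_nonneg hδ hr)] at hx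
  obtain ⟨y, hyS, hxy⟩ := Set.mem_iUnion₂.1 hx
  rw [mem_closedBall] at hxy
  rw [← cthickening_closure]
  rcases le_total (dist x y) r with hle | hle
  · exact ⟨y, self_subset_cthickening _ hyS, hle⟩
  · obtain ⟨z, hxz, hzy⟩ := hgeo.exists_dist_eq_sub x y hr hle
    exact ⟨z, mem_cthickening_of_dist_le z y δ _ hyS (by linarith), hxz.le⟩

theorem exists_mem_inter_cthickening_dist_le [ProperSpace X] (hgeo : IsGeodesicSpace X)
    {P Q : Set X} {a b r : ℝ} (ha : 0 ≤ a) (hb : 0 ≤ b) (hr : 0 ≤ r) {x : X}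
    (hx : x ∈ cthickening a P ∩ cthickening (b + r) Q) :
    ∃ z ∈ cthickening (a + r) P ∩ cthickening b Q, dist x z ≤ r := by
  obtain ⟨z, hzQ, hxz⟩ := hgeo.exists_mem_cthickening_dist_le hb hr hx.2
  have hzP : z ∈ cthickening r (cthickening a P) :=
    mem_cthickening_of_dist_le z x r _ hx.1 (by rwa [dist_comm])
  exact ⟨z, ⟨add_comm a r ▸ cthickening_cthickening_subset hr ha P hzP, hzQ⟩, hxz⟩

theorem hausdorffEDist_inter_cthickening_le [ProperSpace X] (hgeo : IsGeodesicSpace X)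
    (P Q : Set X) {a b r : ℝ} (ha : 0 ≤ a) (hb : 0 ≤ b) (hr : 0 ≤ r) :
    hausdorffEDist (cthickening a P ∩ cthickening (b + r) Q)
      (cthickening (a + r) P ∩ cthickening b Q) ≤ ENNReal.ofReal r := by
  refine hausdorffEDist_le_of_mem_edist (fun x hx => ?_) (fun y hy => ?_)
  · obtain ⟨z, hz, hxz⟩ := hgeo.exists_mem_inter_cthickening_dist_le ha hb hr hx
    exact ⟨z, hz, (edist_le_ofReal hr).2 hxz⟩
  · rw [Set.inter_comm] at hy
    obtain ⟨w, hw, hyw⟩ := hgeo.exists_mem_inter_cthickening_dist_le hb ha hr hy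
    exact ⟨w, Set.inter_comm _ _ ▸ hw, (edist_le_ofReal hr).2 hyw⟩

end IsGeodesicSpace

theorem edist_eq_ofReal_sub_of_edist_le {E : Type*} [PseudoEMetricSpace E] {c : ℝ → E} {d : ℝ}
    (hc : ∀ t s, 0 ≤ t → t ≤ s → s ≤ d → edist (c t) (c s) ≤ ENNReal.ofReal (s - t))
    (hd : edist (c 0) (c d) = ENNReal.ofReal d) {t s : ℝ} (ht : 0 ≤ t) (hts : t ≤ s)
    (hsd : s ≤ d) : edist (c t) (c s) = ENNReal.ofReal (s - t) := by
  refine le_antisymm (hc t s ht hts hsd) ?_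
  have key : ENNReal.ofReal t + ENNReal.ofReal (s - t) + ENNReal.ofReal (d - s) ≤
      ENNReal.ofReal t + edist (c t) (c s) + ENNReal.ofReal (d - s) :=
    calc ENNReal.ofReal t + ENNReal.ofReal (s - t) + ENNReal.ofReal (d - s)
        = ENNReal.ofReal d := by
          rw [← ENNReal.ofReal_add ht (sub_nonneg.2 hts),
            ← ENNReal.ofReal_add (by linarith) (sub_nonneg.2 hsd)]
          congr 1
          ring
      _ = edist (c 0) (c d) := hd.symm
      _ ≤ edist (c 0) (c t) + edist (c t) (c s) + edist (c s) (c d) := edist_triangle4 _ _ _ _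
      _ ≤ ENNReal.ofReal t + edist (c t) (c s) + ENNReal.ofReal (d - s) := by
          gcongr
          · simpa only [sub_zero] using hc 0 t le_rfl ht (hts.trans hsd)
          · exact hc s d (ht.trans hts) hsd le_rfl
  exact (ENNReal.add_le_add_iff_left ENNReal.ofReal_ne_top).1
    ((ENNReal.add_le_add_iff_right ENNReal.ofReal_ne_top).1 key)

theorem canonical_hausdorff_geodesic_general {X : Type*} [MetricSpace X] [ProperSpace X]
    (hgeo : IsGeodesicSpace X) (A B : Set X)
    (hAc : IsClosed A) (hBc : IsClosed B)
    (hfin : EMetric.hausdorffEdist A B ≠ ⊤)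
    (d : ℝ) (hd : d = (EMetric.hausdorffEdist A B).toReal) :
    Metric.cthickening 0 A ∩ Metric.cthickening (d - 0) B = A ∧
    Metric.cthickening d A ∩ Metric.cthickening (d - d) B = B ∧
    ∀ t s : ℝ, 0 ≤ t → t ≤ s → s ≤ d →
      EMetric.hausdorffEdist
          (Metric.cthickening t A ∩ Metric.cthickening (d - t) B)
          (Metric.cthickening s A ∩ Metric.cthickening (d - s) B)
        = ENNReal.ofReal (s - t) := by
  have hAB : hausdorffEDist A B = ENNReal.ofReal d := by
    rw [hd]; exact (ENNReal.ofReal_toReal hfin).symm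
  have hC₀ : cthickening 0 A ∩ cthickening (d - 0) B = A := by
    rw [sub_zero, cthickening_zero, hAc.closure_eq,
      Set.inter_eq_left.2 (subset_cthickening_of_hausdorffEDist_le hAB.le)]
  have hC_d : cthickening d A ∩ cthickening (d - d) B = B := by
    rw [sub_self, cthickening_zero, hBc.closure_eq, Set.inter_eq_right.2
      (subset_cthickening_of_hausdorffEDist_le (hausdorffEDist_comm.trans hAB).le)]
  let C : ℝ → TopologicalSpace.Closeds X := fun t =>
    ⟨cthickening t A ∩ cthickening (d - t) B, isClosed_cthickening.inter isClosed_cthickening⟩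
  have hC_le : ∀ t s, 0 ≤ t → t ≤ s → s ≤ d → edist (C t) (C s) ≤ ENNReal.ofReal (s - t) :=
    fun t s ht hts hsd => by
      have h :=
        hgeo.hausdorffEDist_inter_cthickening_le A B ht (sub_nonneg.2 hsd) (sub_nonneg.2 hts)
      rwa [sub_add_sub_cancel, add_sub_cancel] at h
  have hC_ends : edist (C 0) (C d) = ENNReal.ofReal d := by
    change hausdorffEDist (cthickening 0 A ∩ _) (cthickening d A ∩ _) = _
    rw [hC₀, hC_d, hAB]
  exact ⟨hC₀, hC_d, fun t s ht hts hsd =>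
    edist_eq_ofReal_sub_of_edist_le hC_le hC_ends ht hts hsd⟩

/-- in a proper geodesic space, for closed nonempty `A`, `B` at
finite Hausdorff distance `d`, the family `C_t = B_t(A) ∩ B_{d−t}(B)` satisfies
`C_0 = A`, `C_d = B` and `d_H(C_t, C_s) = s − t` for `0 ≤ t ≤ s ≤ d`; i.e. it is
a shortest geodesic for the Hausdorff metric whose length is the distance `d`
between its endpoints. -/
theorem canonical_hausdorff_geodesic {X : Type*} [MetricSpace X] [ProperSpace X]
    (hgeo : IsGeodesicSpace X) (A B : Set X) (hA : A.Nonempty) (hB : B.Nonempty)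
    (hAc : IsClosed A) (hBc : IsClosed B)
    (hfin : EMetric.hausdorffEdist A B ≠ ⊤)
    (d : ℝ) (hd : d = (EMetric.hausdorffEdist A B).toReal) :
    Metric.cthickening 0 A ∩ Metric.cthickening (d - 0) B = A ∧
    Metric.cthickening d A ∩ Metric.cthickening (d - d) B = B ∧
    ∀ t s : ℝ, 0 ≤ t → t ≤ s → s ≤ d →
      EMetric.hausdorffEdist
          (Metric.cthickening t A ∩ Metric.cthickening (d - t) B)
          (Metric.cthickening s A ∩ Metric.cthickening (d - s) B)
        = ENNReal.ofReal (s - t) :=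
  canonical_hausdorff_geodesic_general hgeo A B hAc hBc hfin d hd

end
end

section
/- Let X be a proper geodesic metric space and A a nonempty closed subset of X such that d_H(A, X) = d_GH(A, X) = d < ∞ (A regarded as a metric space with the induced metric). For t ∈ [0, d] let C_t = B_t(A) be the closed t-neighborhood of A in X (this is the canonical Hausdorff geodesic from A to X, since B_{d−t}(X) = X). Then for all 0 ≤ t ≤ s ≤ d one has d_GH(C_t, C_s) = s − t, where C_t and C_s carry the induced metrics; hence the canonical Hausdorff geodesic is a shortest curve with respect to the Gromov–Hausdorff distance. -/
open scoped ENNReal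

noncomputable section

section Aux

open Metric ENNReal

variable {Y Z W : Type*} [MetricSpace Y] [MetricSpace Z] [MetricSpace W]

lemma abs_dist_sub_dist_le {X : Type*} [MetricSpace X] (x x' y y' : X) :
    |dist x x' - dist y y'| ≤ dist x y + dist x' y' := by
  rw [abs_sub_le_iff]
  constructor
  · have h1 := dist_triangle4 x y y' x'
    have h2 := dist_comm x' y'
    linarith
  · have h1 := dist_triangle4 y x x' y'
    have h2 := dist_comm x y
    linarith

lemma le_distortion {R : Set (Y × Z)} {p q : Y × Z} (hp : p ∈ R) (hq : q ∈ R) :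
    ENNReal.ofReal |dist p.1 q.1 - dist p.2 q.2| ≤ distortion R :=
  le_iSup₂_of_le p hp (le_iSup₂_of_le q hq le_rfl)

lemma distortion_le {R : Set (Y × Z)} {C : ℝ≥0∞}
    (h : ∀ p ∈ R, ∀ q ∈ R, ENNReal.ofReal |dist p.1 q.1 - dist p.2 q.2| ≤ C) :
    distortion R ≤ C :=
  iSup₂_le fun p hp => iSup₂_le fun q hq => h p hp q hq

lemma ghDist_le_distortion_half {R : Set (Y × Z)} (hR : IsCorrespondence R) :
    ghDist Y Z ≤ distortion R / 2 :=
  ENNReal.div_le_div_right (iInf₂_le R hR) 2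

lemma ghDist_le_of_corr {R : Set (Y × Z)} (hR : IsCorrespondence R) {r : ℝ} (hr : 0 ≤ r)
    (h : ∀ p ∈ R, ∀ q ∈ R, |dist p.1 q.1 - dist p.2 q.2| ≤ 2 * r) :
    ghDist Y Z ≤ ENNReal.ofReal r := by
  have hdis : distortion R ≤ ENNReal.ofReal (2 * r) :=
    distortion_le fun p hp q hq => ENNReal.ofReal_le_ofReal (h p hp q hq)
  calc ghDist Y Z ≤ distortion R / 2 := ghDist_le_distortion_half hR
    _ ≤ ENNReal.ofReal (2 * r) / 2 := ENNReal.div_le_div_right hdis 2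
    _ = ENNReal.ofReal r := by
        rw [ENNReal.ofReal_mul (by norm_num : (0:ℝ) ≤ 2)]
        norm_num
        rw [mul_div_assoc, ENNReal.mul_div_cancel' (by norm_num) (by norm_num)]

lemma ghDist_triangle (Y Z W : Type*) [MetricSpace Y] [MetricSpace Z] [MetricSpace W] :
    ghDist Y W ≤ ghDist Y Z + ghDist Z W := by
  unfold ghDist
  rw [ENNReal.div_add_div_same]
  apply ENNReal.div_le_div_right
  simp_rw [ENNReal.iInf_add, ENNReal.add_iInf]
  refine le_iInf fun R => le_iInf fun hR => le_iInf fun S => le_iInf fun hS => ?_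
  set T : Set (Y × W) := {p | ∃ z : Z, (p.1, z) ∈ R ∧ (z, p.2) ∈ S} with hT
  have hTc : IsCorrespondence T := by
    constructor
    · intro y
      obtain ⟨z, hz⟩ := hR.1 y
      obtain ⟨w, hw⟩ := hS.1 z
      exact ⟨w, z, hz, hw⟩
    · intro w
      obtain ⟨z, hz⟩ := hS.2 w
      obtain ⟨y, hy⟩ := hR.2 z
      exact ⟨y, z, hy, hz⟩
  refine le_trans (iInf₂_le T hTc) ?_
  refine distortion_le fun p hp q hq => ?_
  obtain ⟨z, hpz, hzp⟩ := hp
  obtain ⟨z', hqz, hzq⟩ := hq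
  have habs : |dist p.1 q.1 - dist p.2 q.2| ≤
      |dist p.1 q.1 - dist z z'| + |dist z z' - dist p.2 q.2| := abs_sub_le _ _ _
  calc ENNReal.ofReal |dist p.1 q.1 - dist p.2 q.2|
      ≤ ENNReal.ofReal (|dist p.1 q.1 - dist z z'| + |dist z z' - dist p.2 q.2|) :=
        ENNReal.ofReal_le_ofReal habs
    _ ≤ ENNReal.ofReal |dist p.1 q.1 - dist z z'| +
        ENNReal.ofReal |dist z z' - dist p.2 q.2| := ENNReal.ofReal_add_le
    _ ≤ distortion R + distortion S := by
        gcongr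
        · exact le_distortion (p := (p.1, z)) (q := (q.1, z')) hpz hqz
        · exact le_distortion (p := (z, p.2)) (q := (z', q.2)) hzp hzq

/-- In a proper geodesic space, a point at `infDist ≤ s` from a closed nonempty set `A`
can be projected to the `t`-cthickening within distance `s - t`. -/
lemma exists_proj_cthickening {X : Type*} [MetricSpace X] [ProperSpace X]
    (hgeo : IsGeodesicSpace X) {A : Set X} (hA : A.Nonempty) (hAc : IsClosed A)
    {x : X} {t s : ℝ} (ht : 0 ≤ t) (hts : t ≤ s) (hxs : Metric.infDist x A ≤ s) :
    ∃ z ∈ Metric.cthickening t A, dist x z ≤ s - t := by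
  obtain ⟨a, haA, hax⟩ := hAc.exists_infDist_eq_dist hA x
  by_cases h : dist x a ≤ t
  · exact ⟨x, Metric.mem_cthickening_of_dist_le x a t A haA h, by simp; linarith⟩
  · push_neg at h
    obtain ⟨γ, hγ0, hγ1, hγd⟩ := hgeo a x
    have hr : dist a x = dist x a := dist_comm a x
    have htr : t ≤ dist a x := by rw [hr]; exact h.le
    have hmem0 : (0:ℝ) ∈ Set.Icc (0:ℝ) (dist a x) := ⟨le_rfl, dist_nonneg⟩
    have hmemt : t ∈ Set.Icc (0:ℝ) (dist a x) := ⟨ht, htr⟩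
    have hmemr : dist a x ∈ Set.Icc (0:ℝ) (dist a x) := ⟨dist_nonneg, le_rfl⟩
    refine ⟨γ t, ?_, ?_⟩
    · have : dist (γ t) a ≤ t := by
        rw [← hγ0]
        rw [hγd t 0 hmemt hmem0]
        rw [sub_zero, abs_of_nonneg ht]
      exact Metric.mem_cthickening_of_dist_le (γ t) a t A haA this
    · have hx : x = γ (dist a x) := hγ1.symm
      rw [hx]
      rw [hγd (dist a x) t hmemr hmemt]
      rw [abs_of_nonneg (by linarith)]
      have : dist x a ≤ s := hax ▸ hxs
      rw [hr]; linarith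

end Aux

section Aux2

open Metric ENNReal

lemma ghDist_subsets_le {X : Type*} [MetricSpace X] {P Q : Set X} {r : ℝ} (hr : 0 ≤ r)
    (h1 : ∀ p ∈ P, ∃ q ∈ Q, dist p q ≤ r) (h2 : ∀ q ∈ Q, ∃ p ∈ P, dist p q ≤ r) :
    ghDist P Q ≤ ENNReal.ofReal r := by
  set R : Set (↥P × ↥Q) := {p | dist (p.1 : X) (p.2 : X) ≤ r} with hRdef
  have hRc : IsCorrespondence R := by
    constructor
    · rintro ⟨p, hp⟩
      obtain ⟨q, hq, hd⟩ := h1 p hp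
      exact ⟨⟨q, hq⟩, hd⟩
    · rintro ⟨q, hq⟩
      obtain ⟨p, hp, hd⟩ := h2 q hq
      exact ⟨⟨p, hp⟩, hd⟩
  refine ghDist_le_of_corr hRc hr fun p hp q hq => ?_
  simp only [hRdef, Set.mem_setOf_eq] at hp hq
  simp only [Subtype.dist_eq]
  have habs := abs_dist_sub_dist_le (p.1 : X) (q.1 : X) (p.2 : X) (q.2 : X)
  linarith

lemma ghDist_subset_space_le {X : Type*} [MetricSpace X] {P : Set X} {r : ℝ} (hr : 0 ≤ r)
    (h2 : ∀ x : X, ∃ p ∈ P, dist p x ≤ r) :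
    ghDist P X ≤ ENNReal.ofReal r := by
  set R : Set (↥P × X) := {p | dist (p.1 : X) p.2 ≤ r} with hRdef
  have hRc : IsCorrespondence R := by
    constructor
    · rintro ⟨p, hp⟩
      exact ⟨p, by simpa [hRdef] using hr⟩
    · intro x
      obtain ⟨p, hp, hd⟩ := h2 x
      exact ⟨⟨p, hp⟩, hd⟩
  refine ghDist_le_of_corr hRc hr fun p hp q hq => ?_
  simp only [hRdef, Set.mem_setOf_eq] at hp hq
  simp only [Subtype.dist_eq]
  have habs := abs_dist_sub_dist_le (p.1 : X) (q.1 : X) p.2 q.2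
  linarith

end Aux2

/-- if `A` is a nonempty closed subset of a proper geodesic space
`X` with `d_H(A, X) = d_GH(A, X) = d < ∞`, then the canonical Hausdorff geodesic
`C_t = B_t(A)` satisfies `d_GH(C_t, C_s) = s − t` for `0 ≤ t ≤ s ≤ d`, i.e. it is
shortest for the Gromov–Hausdorff distance. -/
theorem canonical_geodesic_is_GH_geodesic {X : Type*} [MetricSpace X] [ProperSpace X]
    (hgeo : IsGeodesicSpace X) (A : Set X) (hA : A.Nonempty) (hAc : IsClosed A)
    (hfin : EMetric.hausdorffEdist A (Set.univ : Set X) ≠ ⊤)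
    (heq : EMetric.hausdorffEdist A (Set.univ : Set X) = ghDist A X)
    (d : ℝ) (hd : d = (EMetric.hausdorffEdist A (Set.univ : Set X)).toReal)
    (t s : ℝ) (h0 : 0 ≤ t) (hts : t ≤ s) (hsd : s ≤ d) :
    ghDist (Metric.cthickening t A) (Metric.cthickening s A) = ENNReal.ofReal (s - t) := by
  classical
  set Ct := Metric.cthickening t A with hCt
  set Cs := Metric.cthickening s A with hCs
  have hd0 : 0 ≤ d := hd ▸ ENNReal.toReal_nonneg
  have hs0 : 0 ≤ s := h0.trans hts
  have hH : EMetric.hausdorffEdist A (Set.univ : Set X) = ENNReal.ofReal d := by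
    rw [hd, ENNReal.ofReal_toReal hfin]
  have hinfd : ∀ x : X, Metric.infDist x A ≤ d := by
    intro x
    have h1 : EMetric.infEdist x A ≤ ENNReal.ofReal d := by
      calc EMetric.infEdist x A ≤ EMetric.hausdorffEdist (Set.univ : Set X) A :=
            EMetric.infEdist_le_hausdorffEdist_of_mem (Set.mem_univ x)
        _ = EMetric.hausdorffEdist A (Set.univ : Set X) := EMetric.hausdorffEdist_comm
        _ = ENNReal.ofReal d := hH
    show (EMetric.infEdist x A).toReal ≤ d
    exact ENNReal.toReal_le_of_le_ofReal hd0 h1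
  have hinfs : ∀ y ∈ Cs, Metric.infDist y A ≤ s := by
    intro y hy
    show (EMetric.infEdist y A).toReal ≤ s
    exact ENNReal.toReal_le_of_le_ofReal hs0 (Metric.mem_cthickening_iff.mp hy)
  have hinft : ∀ y ∈ Ct, Metric.infDist y A ≤ t := by
    intro y hy
    show (EMetric.infEdist y A).toReal ≤ t
    exact ENNReal.toReal_le_of_le_ofReal h0 (Metric.mem_cthickening_iff.mp hy)
  -- upper bound
  have hupper : ghDist Ct Cs ≤ ENNReal.ofReal (s - t) := by
    refine ghDist_subsets_le (sub_nonneg.2 hts) ?_ ?_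
    · intro p hp
      refine ⟨p, Metric.cthickening_mono hts A hp, ?_⟩
      simp only [dist_self]
      linarith
    · intro q hq
      obtain ⟨z, hz, hdz⟩ := exists_proj_cthickening hgeo hA hAc h0 hts (hinfs q hq)
      exact ⟨z, hz, by rwa [dist_comm]⟩
  -- lower bound pieces
  have g1 : ghDist A Ct ≤ ENNReal.ofReal t := by
    refine ghDist_subsets_le h0 ?_ ?_
    · intro a ha
      exact ⟨a, Metric.self_subset_cthickening A ha, by simpa using h0⟩
    · intro q hq
      obtain ⟨a, haA, hax⟩ := hAc.exists_infDist_eq_dist hA q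
      refine ⟨a, haA, ?_⟩
      rw [dist_comm]
      rw [← hax]
      exact hinft q hq
  have g3 : ghDist Cs X ≤ ENNReal.ofReal (d - s) := by
    refine ghDist_subset_space_le (sub_nonneg.2 hsd) ?_
    intro x
    obtain ⟨z, hz, hdz⟩ := exists_proj_cthickening hgeo hA hAc hs0 hsd (hinfd x)
    exact ⟨z, hz, by rwa [dist_comm]⟩
  have hAX : ghDist A X = ENNReal.ofReal d := by rw [← heq, hH]
  have htr : ENNReal.ofReal d ≤ ghDist Ct Cs + ENNReal.ofReal (d - (s - t)) := by
    have step : ENNReal.ofReal d ≤ ENNReal.ofReal t + (ghDist Ct Cs + ENNReal.ofReal (d - s)) := by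
      calc ENNReal.ofReal d = ghDist A X := hAX.symm
        _ ≤ ghDist A Ct + ghDist Ct X := ghDist_triangle _ _ _
        _ ≤ ghDist A Ct + (ghDist Ct Cs + ghDist Cs X) := by
            gcongr
            exact ghDist_triangle _ _ _
        _ ≤ ENNReal.ofReal t + (ghDist Ct Cs + ENNReal.ofReal (d - s)) := by gcongr
    have hre : ENNReal.ofReal t + ENNReal.ofReal (d - s) = ENNReal.ofReal (d - (s - t)) := by
      rw [← ENNReal.ofReal_add h0 (by linarith)]
      congr 1
      ring
    calc ENNReal.ofReal d
        ≤ ENNReal.ofReal t + (ghDist Ct Cs + ENNReal.ofReal (d - s)) := step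
      _ = ghDist Ct Cs + (ENNReal.ofReal t + ENNReal.ofReal (d - s)) := by ring
      _ = ghDist Ct Cs + ENNReal.ofReal (d - (s - t)) := by rw [hre]
  have hlower : ENNReal.ofReal (s - t) ≤ ghDist Ct Cs := by
    have hsub : ENNReal.ofReal (s - t) =
        ENNReal.ofReal d - ENNReal.ofReal (d - (s - t)) := by
      rw [← ENNReal.ofReal_sub _ (by linarith : (0:ℝ) ≤ d - (s - t))]
      congr 1
      ring
    rw [hsub]
    exact tsub_le_iff_right.mpr htr
  exact le_antisymm hupper hlower

end
end

section
/- Let X be a nonempty subset of the real line ℝ (with the standard metric, X carrying the induced metric). Then d_GH(X, ℝ) = d_H(X, ℝ), where both distances are values in [0,∞] and d_H is the Hausdorff distance between X and ℝ as subsets of ℝ. -/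
open scoped ENNReal

noncomputable section

/-!
Pairing the points of `X` and `ℝ` that lie at distance `< r` gives a correspondence of distortion
at most `2 r` as soon as `r` exceeds the Hausdorff distance.

Conversely, a correspondence of distortion `c < ∞` yields a map `f : ℝ → X` with
`|dist (f s) (f t) - dist s t| ≤ c`. Such a rough isometry of `ℝ` is unbounded in both directions,
and if some `p` were at distance `r > c / 2` from its image, then `f` could not jump across `p`
between points closer than `2 r - c`, so `{t | f t < p}` would be a proper nonempty clopen subset
of `ℝ`. Hence every real number is within `c / 2` of `X`.
-/

open Metric Set

lemma ofReal_abs_dist_sub_dist_le_distortion {X Y : Type*} [MetricSpace X] [MetricSpace Y]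
    {R : Set (X × Y)} {p q : X × Y} (hp : p ∈ R) (hq : q ∈ R) :
    ENNReal.ofReal |dist p.1 q.1 - dist p.2 q.2| ≤ distortion R :=
  le_iSup₂_of_le p hp <| le_iSup₂_of_le q hq le_rfl

lemma ghDist_le_distortion_div_two {X Y : Type*} [MetricSpace X] [MetricSpace Y]
    {R : Set (X × Y)} (hR : IsCorrespondence R) : ghDist X Y ≤ distortion R / 2 :=
  ENNReal.div_le_div_right (iInf₂_le R hR) 2

lemma le_ghDist {X Y : Type*} [MetricSpace X] [MetricSpace Y] {d : ℝ≥0∞}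
    (h : ∀ R : Set (X × Y), IsCorrespondence R → d ≤ distortion R / 2) : d ≤ ghDist X Y := by
  rw [ghDist, ENNReal.le_div_iff_mul_le (Or.inl two_ne_zero) (Or.inl ENNReal.ofNat_ne_top)]
  exact le_iInf₂ fun R hR =>
    (ENNReal.le_div_iff_mul_le (Or.inl two_ne_zero) (Or.inl ENNReal.ofNat_ne_top)).mp (h R hR)

theorem ghDist_le_hausdorffEDist {X Y Z : Type*} [MetricSpace X] [MetricSpace Y] [MetricSpace Z]
    {φ : X → Z} {ψ : Y → Z} (hφ : Isometry φ) (hψ : Isometry ψ) :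
    ghDist X Y ≤ hausdorffEDist (range φ) (range ψ) := by
  refine le_of_forall_gt_imp_ge_of_dense fun r hr => ?_
  set R : Set (X × Y) := {p | edist (φ p.1) (ψ p.2) < r}
  have hR : IsCorrespondence R := by
    constructor
    · intro x
      obtain ⟨_, ⟨y, rfl⟩, hxy⟩ := infEDist_lt_iff.mp <|
        (infEDist_le_hausdorffEDist_of_mem (mem_range_self x)).trans_lt hr
      exact ⟨y, hxy⟩
    · intro y
      rw [hausdorffEDist_comm] at hr
      obtain ⟨_, ⟨x, rfl⟩, hxy⟩ := infEDist_lt_iff.mp <|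
        (infEDist_le_hausdorffEDist_of_mem (mem_range_self y)).trans_lt hr
      exact ⟨x, by rwa [edist_comm] at hxy⟩
  have hdis : distortion R ≤ r * 2 := by
    refine iSup₂_le fun p hp => iSup₂_le fun q hq => ?_
    rw [← hφ.dist_eq, ← hψ.dist_eq]
    calc ENNReal.ofReal |dist (φ p.1) (φ q.1) - dist (ψ p.2) (ψ q.2)|
        ≤ ENNReal.ofReal (dist (φ p.1) (ψ p.2) + dist (φ q.1) (ψ q.2)) :=
          ENNReal.ofReal_le_ofReal (dist_dist_dist_le _ _ _ _)
      _ = edist (φ p.1) (ψ p.2) + edist (φ q.1) (ψ q.2) := by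
          rw [ENNReal.ofReal_add dist_nonneg dist_nonneg, edist_dist, edist_dist]
      _ ≤ r * 2 := by rw [mul_two]; exact add_le_add hp.le hq.le
  calc ghDist X Y ≤ distortion R / 2 := ghDist_le_distortion_div_two hR
    _ ≤ r * 2 / 2 := ENNReal.div_le_div_right hdis 2
    _ = r := ENNReal.mul_div_cancel_right two_ne_zero ENNReal.ofNat_ne_top

section RoughIsometry

variable {f : ℝ → ℝ} {c : ℝ}

lemma Real.not_bddBelow_range_of_abs_dist_sub_dist_le
    (hf : ∀ s t, |dist (f s) (f t) - dist s t| ≤ c) : ¬ BddBelow (range f) := by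
  rintro ⟨m, hm⟩
  have hfm : ∀ t, m ≤ f t := fun t => hm (mem_range_self t)
  have hc : 0 ≤ c := by simpa using hf 0 0
  set T := f 0 - m + 2 * c + 1
  have hT : 0 < T := by linarith [hfm 0]
  have hupper : ∀ t, |t| = T → f t ≤ f 0 + T + c := fun t ht => by
    have := (abs_le.mp (hf t 0)).2
    rw [Real.dist_eq, Real.dist_eq, sub_zero, ht] at this
    linarith [le_abs_self (f t - f 0)]
  have hspread : 2 * T - c ≤ |f T - f (-T)| := by
    have := (abs_le.mp (hf T (-T))).1
    rw [Real.dist_eq, Real.dist_eq, sub_neg_eq_add, ← two_mul,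
      abs_of_pos (show 0 < 2 * T by linarith)] at this
    linarith
  have hclose : |f T - f (-T)| ≤ f 0 + T + c - m :=
    abs_sub_le_iff.mpr ⟨by linarith [hupper T (abs_of_pos hT), hfm (-T)],
      by linarith [hupper (-T) (by rw [abs_neg, abs_of_pos hT]), hfm T]⟩
  linarith

lemma Real.infDist_range_le_of_abs_dist_sub_dist_le
    (hf : ∀ s t, |dist (f s) (f t) - dist s t| ≤ c) (p : ℝ) :
    infDist p (range f) ≤ c / 2 := by
  by_contra! hp
  obtain ⟨r, hcr, hr⟩ := exists_between hp
  have hfar : ∀ t, r < dist (f t) p := fun t =>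
    hr.trans_le (dist_comm p (f t) ▸ infDist_le_dist_of_mem (mem_range_self t))
  -- Values of `f` avoid `(p - r, p + r)` and move by less than `2 r` across distances `< 2 r - c`,
  -- so they cannot cross `p` there.
  have hstay : ∀ s t, dist s t < 2 * r - c → (f s < p ↔ f t < p) := fun s t hst => by
    have hft := (abs_le.mp (hf s t)).2
    have hs := hfar s
    have ht := hfar t
    rw [Real.dist_eq] at hft hs ht
    constructor <;> intro h <;> by_contra h' <;>
      cases abs_cases (f s - p) <;> cases abs_cases (f t - p) <;>
      cases abs_cases (f s - f t) <;> linarith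
  have hopen : ∀ s, ball s (2 * r - c) ⊆ {t | f t < p ↔ f s < p} := fun s t ht =>
    (hstay s t (by rwa [dist_comm])).symm
  have hclopen : IsClopen {t | f t < p} := by
    refine ⟨isOpen_compl_iff.mp ?_, ?_⟩ <;>
      refine isOpen_iff.mpr fun s hs => ⟨2 * r - c, by linarith, fun t ht => ?_⟩
    · exact fun h => hs ((hopen s ht).mp h)
    · exact (hopen s ht).mpr hs
  rcases isClopen_iff.mp hclopen with hempty | huniv
  · refine Real.not_bddBelow_range_of_abs_dist_sub_dist_le hf ⟨p, forall_mem_range.mpr fun t => ?_⟩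
    exact not_lt.mp fun h => (eq_empty_iff_forall_notMem.mp hempty t) h
  · have hf' : ∀ s t, |dist (-f s) (-f t) - dist s t| ≤ c := fun s t => by
      rw [dist_neg_neg]; exact hf s t
    refine Real.not_bddBelow_range_of_abs_dist_sub_dist_le hf' ⟨-p, forall_mem_range.mpr fun t => ?_⟩
    exact neg_le_neg (eq_univ_iff_forall.mp huniv t).le

end RoughIsometry

lemma Real.hausdorffEDist_univ_le_distortion_div_two {X : Set ℝ} {R : Set (X × ℝ)}
    (hR : IsCorrespondence R) : hausdorffEDist X univ ≤ distortion R / 2 := by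
  rcases eq_or_ne (distortion R) ⊤ with htop | htop
  · simp [htop, ENNReal.top_div_of_ne_top]
  choose g hg using hR.2
  have hf : ∀ s t, |dist (g s : ℝ) (g t) - dist s t| ≤ (distortion R).toReal := fun s t =>
    (ENNReal.ofReal_le_iff_le_toReal htop).mp (ofReal_abs_dist_sub_dist_le_distortion (hg s) (hg t))
  refine hausdorffEDist_le_of_infEDist (fun x _ => by simp [infEDist_zero_of_mem]) fun y _ => ?_
  calc infEDist y X ≤ infEDist y (range fun t => (g t : ℝ)) :=
        infEDist_anti (range_subset_iff.mpr fun t => (g t).2)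
    _ = ENNReal.ofReal (infDist y (range fun t => (g t : ℝ))) :=
        (ENNReal.ofReal_toReal (infEDist_ne_top (range_nonempty _))).symm
    _ ≤ ENNReal.ofReal ((distortion R).toReal / 2) :=
        ENNReal.ofReal_le_ofReal (Real.infDist_range_le_of_abs_dist_sub_dist_le hf y)
    _ = distortion R / 2 := by
        rw [ENNReal.ofReal_div_of_pos two_pos, ENNReal.ofReal_toReal htop, ENNReal.ofReal_ofNat]

theorem ghDist_eq_hausdorff_real_general (X : Set ℝ) :
    ghDist X ℝ = EMetric.hausdorffEdist X (Set.univ : Set ℝ) := by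
  refine le_antisymm ?_ (le_ghDist fun _ hR => Real.hausdorffEDist_univ_le_distortion_div_two hR)
  have h := ghDist_le_hausdorffEDist (isometry_subtype_coe (s := X)) isometry_id
  rwa [Subtype.range_coe, range_id] at h

/-- for any nonempty subset `X ⊆ ℝ`, the Gromov–Hausdorff
distance between `X` (with the induced metric) and `ℝ` equals the Hausdorff
distance between `X` and `ℝ` (both valued in `[0,∞]`). -/
theorem ghDist_eq_hausdorff_real (X : Set ℝ) (hX : X.Nonempty) :
    ghDist X ℝ = EMetric.hausdorffEdist X (Set.univ : Set ℝ) :=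
  ghDist_eq_hausdorff_real_general X

end
end

section
/- Let X be a nonempty subset of the real line ℝ with d_H(X, ℝ) < ∞ (equivalently, X is an ε-net in ℝ for some finite ε). Then the ultrametric pseudodiameter of X (in the induced metric) satisfies diam_u X = 2·d_H(X, ℝ). -/
open scoped ENNReal

noncomputable section

/-! Every real number lies within `d_H(X, ℝ) + ε` of `X`, so a retraction of `ℝ` onto `X` moving
points by at most that much turns an arbitrarily fine chain of `ℝ` between two points of `X` into a
chain of `X` whose steps exceed `2 d_H(X, ℝ)` by arbitrarily little. Conversely, a point `z` at
distance `t` from `X` leaves the gap `(z - t, z + t)` in `X`; since `X` is unbounded on both sides,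
a chain of `X` from a point left of `z` to a point right of `z` has to jump over the gap, with a
step of length at least `2t`. -/

open Metric

section Chains

variable {α : Type*} [MetricSpace α]

theorem ultraDist_le_of_chain {x y : α} (n : ℕ) (f : Fin (n + 1) → α) (h₀ : f 0 = x)
    (hₙ : f (Fin.last n) = y) : ultraDist x y ≤ ⨆ i : Fin n, edist (f i.castSucc) (f i.succ) :=
  iInf_le_of_le n <| iInf_le_of_le f <| iInf_le_of_le h₀ <| iInf_le_of_le hₙ le_rfl

theorem le_ultraDist {x y : α} {c : ℝ≥0∞}
    (h : ∀ (n : ℕ) (f : Fin (n + 1) → α), f 0 = x → f (Fin.last n) = y →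
      ∃ i : Fin n, c ≤ edist (f i.castSucc) (f i.succ)) :
    c ≤ ultraDist x y :=
  le_iInf fun n => le_iInf fun f => le_iInf fun h₀ => le_iInf fun hₙ =>
    let ⟨i, hi⟩ := h n f h₀ hₙ
    le_iSup_of_le i hi

end Chains

theorem Fin.exists_castSucc_and_not_succ {n : ℕ} {p : Fin (n + 1) → Prop} (h₀ : p 0)
    (hₙ : ¬p (Fin.last n)) : ∃ i : Fin n, p i.castSucc ∧ ¬p i.succ := by
  by_contra! h
  exact hₙ (Fin.induction h₀ h (Fin.last n))

section NormedSpace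

variable {E : Type*} [NormedAddCommGroup E] [NormedSpace ℝ E]

theorem ultraDist_le_dist_div (x y : E) (n : ℕ) :
    ultraDist x y ≤ ENNReal.ofReal (dist x y / (n + 1)) := by
  refine (ultraDist_le_of_chain (n + 1) (fun i => AffineMap.lineMap x y ((i : ℝ) / (n + 1)))
    (by simp) (by simp [div_self (Nat.cast_add_one_ne_zero (R := ℝ) n)])).trans
    (iSup_le fun i => ?_)
  rw [edist_dist, dist_lineMap_lineMap, Real.dist_eq]
  refine ENNReal.ofReal_le_ofReal (le_of_eq ?_)
  simp only [Fin.val_castSucc, Fin.val_succ, Nat.cast_add_one, ← sub_div, sub_add_cancel_left,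
    abs_div, abs_neg, abs_one]
  rw [abs_of_pos n.cast_add_one_pos, one_div_mul_eq_div]

theorem ultraDist_eq_zero (x y : E) : ultraDist x y = 0 := by
  have h := ENNReal.tendsto_ofReal (tendsto_one_div_add_atTop_nhds_zero_nat.const_mul (dist x y))
  simp only [mul_zero, ENNReal.ofReal_zero, mul_one_div] at h
  exact nonpos_iff_eq_zero.mp (ge_of_tendsto' h (ultraDist_le_dist_div x y))

end NormedSpace

theorem hausdorffEDist_univ_eq_iSup_infEDist {α : Type*} [PseudoEMetricSpace α] (s : Set α) :
    hausdorffEDist s Set.univ = ⨆ z, infEDist z s := by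
  simp [hausdorffEDist_def, infEDist_zero_of_mem (Set.mem_univ _)]

theorem exists_retraction_edist_le {α : Type*} [PseudoEMetricSpace α] {s : Set α} {e : ℝ≥0∞}
    (he : ∀ z, infEDist z s < e) :
    ∃ ρ : α → s, (∀ x : s, ρ x = x) ∧ ∀ z, edist (ρ z : α) z ≤ e := by
  have : ∀ z, ∃ w : s, (z ∈ s → (w : α) = z) ∧ edist (w : α) z ≤ e := by
    intro z
    by_cases hz : z ∈ s
    · exact ⟨⟨z, hz⟩, fun _ => rfl, by simp⟩
    · obtain ⟨w, hw, hzw⟩ := infEDist_lt_iff.mp (he z)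
      exact ⟨⟨w, hw⟩, fun h => absurd h hz, by rw [edist_comm]; exact hzw.le⟩
  choose ρ hρs hρ using this
  exact ⟨ρ, fun x => Subtype.ext (hρs x x.2), hρ⟩

theorem ultraDist_subtype_le {α : Type*} [MetricSpace α] {s : Set α} {e : ℝ≥0∞}
    (he : ∀ z, infEDist z s < e) (x y : s) :
    ultraDist x y ≤ 2 * e + ultraDist (x : α) y := by
  obtain ⟨ρ, hρs, hρ⟩ := exists_retraction_edist_le he
  calc ultraDist x y
      ≤ ⨅ (n : ℕ) (f : Fin (n + 1) → α) (_ : f 0 = x) (_ : f (Fin.last n) = y),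
          2 * e + ⨆ i : Fin n, edist (f i.castSucc) (f i.succ) := by
        refine le_iInf fun n => le_iInf fun f => le_iInf fun h₀ => le_iInf fun hₙ => ?_
        refine (ultraDist_le_of_chain n (ρ ∘ f) (by simp [h₀, hρs]) (by simp [hₙ, hρs])).trans
          (iSup_le fun i => ?_)
        calc edist (ρ (f i.castSucc)) (ρ (f i.succ))
            ≤ edist (ρ (f i.castSucc) : α) (f i.castSucc) + edist (f i.castSucc) (f i.succ)
                + edist (f i.succ) (ρ (f i.succ) : α) := edist_triangle4 _ _ _ _
          _ ≤ e + (⨆ j : Fin n, edist (f j.castSucc) (f j.succ)) + e := by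
            gcongr
            · exact hρ _
            · exact le_iSup (fun j : Fin n => edist (f j.castSucc) (f j.succ)) i
            · rw [edist_comm]; exact hρ _
          _ = 2 * e + ⨆ j : Fin n, edist (f j.castSucc) (f j.succ) := by ring
    _ = 2 * e + ultraDist (x : α) y := by simp only [ultraDist, ENNReal.add_iInf]

theorem ultraDiam_le_two_mul_hausdorffEDist_univ {E : Type*} [NormedAddCommGroup E]
    [NormedSpace ℝ E] (s : Set E) : ultraDiam s ≤ 2 * hausdorffEDist s Set.univ := by
  refine ENNReal.le_of_forall_pos_le_add fun ε hε hfin => ?_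
  have hH : hausdorffEDist s Set.univ ≠ ⊤ := by
    rintro hH
    simp [hH] at hfin
  have he : ∀ z, infEDist z s < hausdorffEDist s Set.univ + ε / 2 := fun z =>
    calc infEDist z s ≤ hausdorffEDist s Set.univ := by
          rw [hausdorffEDist_univ_eq_iSup_infEDist]; exact le_iSup (fun z => infEDist z s) z
      _ < _ := ENNReal.lt_add_right hH (by simpa using hε.ne')
  refine iSup₂_le fun x y => ?_
  calc ultraDist x y ≤ 2 * (hausdorffEDist s Set.univ + ε / 2) + ultraDist (x : E) y :=
        ultraDist_subtype_le he x y
    _ = 2 * hausdorffEDist s Set.univ + ε := by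
        rw [ultraDist_eq_zero, add_zero, mul_add, ENNReal.mul_div_cancel' (by simp) (by simp)]

theorem two_mul_infEDist_le_ultraDist {X : Set ℝ} {x y : X} {z : ℝ} (hxz : (x : ℝ) < z)
    (hzy : z < y) : 2 * infEDist z X ≤ ultraDist x y := by
  refine le_ultraDist fun n f h₀ hₙ => ?_
  obtain ⟨i, hlt, hge⟩ := Fin.exists_castSucc_and_not_succ (p := fun j => (f j : ℝ) < z)
    (by simpa [h₀]) (by simpa [hₙ] using hzy.le)
  have hge : z ≤ f i.succ := not_lt.1 hge
  refine ⟨i, ?_⟩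
  calc 2 * infEDist z X ≤ edist z (f i.castSucc) + edist z (f i.succ) := by
        rw [two_mul]
        gcongr <;> exact infEDist_le_edist_of_mem (Subtype.mem _)
    _ = edist (f i.castSucc) (f i.succ) := by
        rw [Subtype.edist_eq, edist_dist, edist_dist, edist_dist,
          ← ENNReal.ofReal_add dist_nonneg dist_nonneg, Real.dist_eq, Real.dist_eq, Real.dist_eq,
          abs_of_pos (sub_pos.2 hlt), abs_of_nonpos (sub_nonpos.2 hge), abs_of_neg (by linarith)]
        ring_nf

theorem exists_dist_lt_of_hausdorffEDist_univ_ne_top {α : Type*} [PseudoMetricSpace α]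
    {s : Set α} (h : hausdorffEDist s Set.univ ≠ ⊤) : ∃ C : ℝ, ∀ z, ∃ x ∈ s, dist z x < C := by
  refine ⟨(hausdorffEDist s Set.univ).toReal + 1, fun z => ?_⟩
  have hz : infEDist z s < ENNReal.ofReal ((hausdorffEDist s Set.univ).toReal + 1) := by
    calc infEDist z s ≤ hausdorffEDist s Set.univ := by
          rw [hausdorffEDist_univ_eq_iSup_infEDist]; exact le_iSup (fun z => infEDist z s) z
      _ < _ := by
          rw [ENNReal.ofReal_add ENNReal.toReal_nonneg zero_le_one, ENNReal.ofReal_toReal h]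
          exact ENNReal.lt_add_right h (by simp)
  obtain ⟨x, hx, hzx⟩ := infEDist_lt_iff.mp hz
  exact ⟨x, hx, by rwa [edist_dist, ENNReal.ofReal_lt_ofReal_iff (by positivity)] at hzx⟩

theorem exists_mem_lt_and_gt_of_hausdorffEDist_univ_ne_top {X : Set ℝ}
    (h : hausdorffEDist X Set.univ ≠ ⊤) (z : ℝ) : (∃ x ∈ X, x < z) ∧ ∃ y ∈ X, z < y := by
  obtain ⟨C, hC⟩ := exists_dist_lt_of_hausdorffEDist_univ_ne_top h
  obtain ⟨x, hx, hxC⟩ := hC (z - C)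
  obtain ⟨y, hy, hyC⟩ := hC (z + C)
  rw [Real.dist_eq, abs_sub_lt_iff] at hxC hyC
  exact ⟨⟨x, hx, by linarith⟩, y, hy, by linarith⟩

theorem two_mul_hausdorffEDist_univ_le_ultraDiam {X : Set ℝ}
    (h : hausdorffEDist X Set.univ ≠ ⊤) : 2 * hausdorffEDist X Set.univ ≤ ultraDiam X := by
  rw [hausdorffEDist_univ_eq_iSup_infEDist, ENNReal.mul_iSup]
  refine iSup_le fun z => ?_
  obtain ⟨⟨x, hx, hxz⟩, y, hy, hzy⟩ := exists_mem_lt_and_gt_of_hausdorffEDist_univ_ne_top h z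
  exact (two_mul_infEDist_le_ultraDist (x := ⟨x, hx⟩) (y := ⟨y, hy⟩) hxz hzy).trans
    (le_iSup₂ (f := fun a b : X => ultraDist a b) _ _)

theorem ultraDiam_eq_two_hausdorff_general (X : Set ℝ)
    (hfin : EMetric.hausdorffEdist X (Set.univ : Set ℝ) ≠ ⊤) :
    ultraDiam X = 2 * EMetric.hausdorffEdist X (Set.univ : Set ℝ) :=
  le_antisymm (ultraDiam_le_two_mul_hausdorffEDist_univ X)
    (two_mul_hausdorffEDist_univ_le_ultraDiam hfin)

/-- for a nonempty `X ⊆ ℝ` at finite Hausdorff distance from `ℝ`,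
the ultrametric pseudodiameter of `X` equals twice the Hausdorff distance. -/
theorem ultraDiam_eq_two_hausdorff (X : Set ℝ) (hX : X.Nonempty)
    (hfin : EMetric.hausdorffEdist X (Set.univ : Set ℝ) ≠ ⊤) :
    ultraDiam X = 2 * EMetric.hausdorffEdist X (Set.univ : Set ℝ) :=
  ultraDiam_eq_two_hausdorff_general X hfin

end
end

section
/- Let X be a nonempty subset of the n-dimensional Euclidean space ℝⁿ. Then d_GH(X, ℝⁿ) < ∞ if and only if d_H(X, ℝⁿ) < ∞, and the latter holds if and only if X is an ε-net in ℝⁿ for some finite ε (i.e., every point of ℝⁿ is at distance at most ε from X). -/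
open scoped ENNReal RealInnerProductSpace
open Filter Metric

noncomputable section

private lemma euclidean_isometry_surjective {n : ℕ}
    (g : EuclideanSpace ℝ (Fin n) → EuclideanSpace ℝ (Fin n)) (hg : Isometry g) :
    Function.Surjective g := by
  classical
  set h : EuclideanSpace ℝ (Fin n) → EuclideanSpace ℝ (Fin n) := fun x => g x - g 0 with hh
  have hdist : ∀ x y, dist (h x) (h y) = dist x y := by
    intro x y
    simp only [hh, dist_eq_norm, sub_sub_sub_cancel_right]
    rw [← dist_eq_norm]
    exact hg.dist_eq x y
  have hnorm : ∀ x, ‖h x‖ = ‖x‖ := by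
    intro x
    have h0 : h 0 = 0 := by simp [hh]
    have := hdist x 0
    rw [h0, dist_zero_right, dist_zero_right] at this
    exact this
  have hinner : ∀ x y, ⟪h x, h y⟫ = ⟪x, y⟫ := by
    intro x y
    have e1 := norm_sub_sq_real (h x) (h y)
    have e2 := norm_sub_sq_real x y
    have e3 : ‖h x - h y‖ = ‖x - y‖ := by
      rw [← dist_eq_norm, ← dist_eq_norm]; exact hdist x y
    have e4 := hnorm x
    have e5 := hnorm y
    rw [e3, e4, e5] at e1
    nlinarith [e1, e2]
  set b := EuclideanSpace.basisFun (Fin n) ℝ with hb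
  set v : Fin n → EuclideanSpace ℝ (Fin n) := fun i => h (b i) with hv
  have hbon := b.orthonormal
  rw [orthonormal_iff_ite] at hbon
  have hvon : Orthonormal ℝ v := by
    rw [orthonormal_iff_ite]
    intro i j
    rw [hv]
    simp only []
    rw [hinner]
    exact hbon i j
  have hcard : Fintype.card (Fin n) = Module.finrank ℝ (EuclideanSpace ℝ (Fin n)) := by
    simp [finrank_euclideanSpace_fin]
  have hspan : Submodule.span ℝ (Set.range v) = ⊤ :=
    hvon.linearIndependent.span_eq_top_of_card_eq_finrank' hcard
  intro y
  set u : EuclideanSpace ℝ (Fin n) := y - g 0 with hu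
  set x : EuclideanSpace ℝ (Fin n) := ∑ i, ⟪u, v i⟫ • (b i : EuclideanSpace ℝ (Fin n)) with hx
  have hcoord : ∀ j, ⟪h x - u, v j⟫ = 0 := by
    intro j
    have h1 : ⟪h x, v j⟫ = ⟪x, (b j : EuclideanSpace ℝ (Fin n))⟫ := hinner x (b j)
    have h2 : ⟪x, (b j : EuclideanSpace ℝ (Fin n))⟫ = ⟪u, v j⟫ := by
      rw [hx, sum_inner]
      have : ∀ i, ⟪⟪u, v i⟫ • (b i : EuclideanSpace ℝ (Fin n)), (b j : EuclideanSpace ℝ (Fin n))⟫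
          = if i = j then ⟪u, v i⟫ else 0 := by
        intro i
        rw [real_inner_smul_left, hbon i j]
        split <;> simp
      rw [Finset.sum_congr rfl fun i _ => this i]
      simp
    rw [inner_sub_left, h1, h2, sub_self]
  have hmem : h x - u ∈ Submodule.span ℝ (Set.range v) := by rw [hspan]; trivial
  obtain ⟨c, hc⟩ := (Submodule.mem_span_range_iff_exists_fun ℝ).1 hmem
  have hz : ⟪h x - u, h x - u⟫ = 0 := by
    nth_rewrite 2 [← hc]
    rw [inner_sum]
    have : ∀ i, ⟪h x - u, c i • v i⟫ = 0 := by
      intro i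
      rw [real_inner_smul_right, hcoord i, mul_zero]
    rw [Finset.sum_congr rfl fun i _ => this i]
    simp
  have heq : h x = u := sub_eq_zero.1 (inner_self_eq_zero.1 hz)
  refine ⟨x, ?_⟩
  have h2 : g x - g 0 = y - g 0 := heq
  have := congrArg (fun w => w + g 0) h2
  simpa using this

private lemma ultralimit_contradiction {n : ℕ}
    (g : ℕ → EuclideanSpace ℝ (Fin n) → EuclideanSpace ℝ (Fin n)) (ε : ℕ → ℝ) (B : ℝ)
    (hεlim : Tendsto ε atTop (nhds 0))
    (hdist : ∀ k x y, |dist (g k x) (g k y) - dist x y| ≤ ε k)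
    (hbase : ∀ k, ‖g k 0‖ ≤ B)
    (hεB : ∀ k, ε k ≤ B)
    (hlow : ∀ k x, 1 ≤ ‖g k x‖) : False := by
  classical
  set U : Ultrafilter ℕ := Ultrafilter.of atTop with hU
  have hUle : (U : Filter ℕ) ≤ atTop := Ultrafilter.of_le atTop
  have hbound : ∀ k x, g k x ∈ Metric.closedBall (0 : EuclideanSpace ℝ (Fin n)) (‖x‖ + 2 * B) := by
    intro k x
    have h1 : dist (g k x) (g k 0) ≤ dist x 0 + ε k := by
      have := hdist k x 0
      have := abs_le.1 this
      linarith [this.2]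
    have : ‖g k x‖ ≤ dist (g k x) (g k 0) + ‖g k 0‖ := by
      rw [← dist_zero_right, dist_comm (g k x) (0 : EuclideanSpace ℝ (Fin n))]
      calc dist (0 : EuclideanSpace ℝ (Fin n)) (g k x) ≤
          dist (0 : EuclideanSpace ℝ (Fin n)) (g k 0) + dist (g k 0) (g k x) := dist_triangle _ _ _
        _ = dist (g k x) (g k 0) + ‖g k 0‖ := by
            rw [dist_comm (g k 0), dist_comm (0 : EuclideanSpace ℝ (Fin n)) (g k 0),
              dist_zero_right]; ring
    rw [Metric.mem_closedBall, dist_zero_right]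
    have := hεB k
    have := hbase k
    rw [dist_zero_right] at h1
    linarith
  have hlim : ∀ x : EuclideanSpace ℝ (Fin n),
      ∃ l, Tendsto (fun k => g k x) (U : Filter ℕ) (nhds l) := by
    intro x
    have hc : IsCompact (Metric.closedBall (0 : EuclideanSpace ℝ (Fin n)) (‖x‖ + 2 * B)) :=
      isCompact_closedBall _ _
    have hle : (U.map (fun k => g k x) : Filter (EuclideanSpace ℝ (Fin n)))
        ≤ Filter.principal (Metric.closedBall (0 : EuclideanSpace ℝ (Fin n)) (‖x‖ + 2 * B)) := by
      rw [Ultrafilter.coe_map, Filter.le_principal_iff, Filter.mem_map]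
      exact Filter.Eventually.of_forall fun k => hbound k x
    obtain ⟨l, _, hl⟩ := hc.ultrafilter_le_nhds _ hle
    exact ⟨l, by rwa [Ultrafilter.coe_map] at hl⟩
  choose G hG using hlim
  have hiso : Isometry G := by
    apply Isometry.of_dist_eq
    intro x y
    have t1 : Tendsto (fun k => dist (g k x) (g k y)) (U : Filter ℕ) (nhds (dist (G x) (G y))) :=
      (hG x).dist (hG y)
    have t0 : Tendsto (fun k => dist (g k x) (g k y) - dist x y) atTop (nhds 0) := by
      apply squeeze_zero_norm (fun k => hdist k x y) hεlim
    have t2 : Tendsto (fun k => dist (g k x) (g k y)) atTop (nhds (dist x y)) := by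
      have := t0.add_const (dist x y)
      simpa using this
    exact tendsto_nhds_unique t1 (t2.mono_left hUle)
  have hlow' : ∀ x, 1 ≤ ‖G x‖ := by
    intro x
    have t3 : Tendsto (fun k => ‖g k x‖) (U : Filter ℕ) (nhds ‖G x‖) := (hG x).norm
    exact ge_of_tendsto' t3 fun k => hlow k x
  obtain ⟨x, hx⟩ := euclidean_isometry_surjective G hiso 0
  have := hlow' x
  rw [hx, norm_zero] at this
  linarith

private lemma net_of_ghDist {n : ℕ} (X : Set (EuclideanSpace ℝ (Fin n))) (hX : X.Nonempty)
    (hgh : ghDist X (EuclideanSpace ℝ (Fin n)) ≠ ⊤) :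
    ∃ ε : ℝ, ∀ y : EuclideanSpace ℝ (Fin n), ∃ x ∈ X, dist y x ≤ ε := by
  classical
  by_contra hc
  push_neg at hc
  -- extract a correspondence of finite distortion
  have hinf : (⨅ (R : Set (↥X × EuclideanSpace ℝ (Fin n))) (_ : IsCorrespondence R),
      distortion R) ≠ ⊤ := by
    intro htop
    apply hgh
    rw [ghDist, htop]
    simp [ENNReal.top_div_of_ne_top]
  have hinf' : (⨅ (R : Set (↥X × EuclideanSpace ℝ (Fin n))) (_ : IsCorrespondence R),
      distortion R) < ⊤ := lt_top_iff_ne_top.2 hinf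
  rw [iInf_lt_iff] at hinf'
  obtain ⟨R, hR⟩ := hinf'
  rw [iInf_lt_iff] at hR
  obtain ⟨hcorr, hRD⟩ := hR
  set Δ : ℝ≥0∞ := distortion R with hΔ
  set D : ℝ := Δ.toReal with hD
  have hD0 : 0 ≤ D := ENNReal.toReal_nonneg
  have hΔne : Δ ≠ ⊤ := hRD.ne
  have key : ∀ p ∈ R, ∀ q ∈ R,
      |dist (p.1 : EuclideanSpace ℝ (Fin n)) (q.1 : EuclideanSpace ℝ (Fin n))
        - dist p.2 q.2| ≤ D := by
    intro p hp q hq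
    have h1 : ENNReal.ofReal |dist p.1 q.1 - dist p.2 q.2| ≤ Δ := by
      rw [hΔ, distortion]
      exact le_iSup₂_of_le p hp (le_iSup₂_of_le q hq le_rfl)
    rw [← Subtype.dist_eq p.1 q.1]
    exact (ENNReal.ofReal_le_iff_le_toReal hΔne).1 h1
  -- the choice map
  obtain ⟨F, hFR⟩ : ∃ F : EuclideanSpace ℝ (Fin n) → ↥X, ∀ a, (F a, a) ∈ R := by
    choose F hF using hcorr.2
    exact ⟨F, hF⟩
  have hFdist : ∀ a b : EuclideanSpace ℝ (Fin n),
      |dist ((F a : EuclideanSpace ℝ (Fin n))) ((F b : EuclideanSpace ℝ (Fin n))) - dist a b| ≤ D :=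
    fun a b => key (F a, a) (hFR a) (F b, b) (hFR b)
  have hFclose : ∀ x ∈ X, ∃ a : EuclideanSpace ℝ (Fin n),
      dist x ((F a : EuclideanSpace ℝ (Fin n))) ≤ D := by
    intro x hx
    obtain ⟨a, ha⟩ := hcorr.1 ⟨x, hx⟩
    refine ⟨a, ?_⟩
    have := key (⟨x, hx⟩, a) ha (F a, a) (hFR a)
    simp only [dist_self] at this
    have := abs_le.1 this
    simpa using this.2
  -- the far points
  obtain ⟨z, hzfar⟩ : ∃ z : ℕ → EuclideanSpace ℝ (Fin n),
      ∀ k : ℕ, ∀ x ∈ X, (k : ℝ) + 1 < dist (z k) x := by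
    choose Z hZ using hc
    exact ⟨fun k => Z ((k : ℝ) + 1), fun k => hZ ((k : ℝ) + 1)⟩
  set r : ℕ → ℝ := fun k => Metric.infDist (z k) X with hr
  have hrk : ∀ k : ℕ, (k : ℝ) + 1 ≤ r k := by
    intro k
    by_contra hlt
    push_neg at hlt
    obtain ⟨x, hx, hdx⟩ := (Metric.infDist_lt_iff hX).1 hlt
    exact absurd hdx (not_lt.2 (le_of_lt (hzfar k x hx)))
  have hr1 : ∀ k, (1 : ℝ) ≤ r k := by
    intro k
    have h1 := hrk k
    have h2 : ((k : ℝ)) ≥ 0 := Nat.cast_nonneg k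
    linarith
  have hr0 : ∀ k, (0 : ℝ) < r k := fun k => lt_of_lt_of_le one_pos (hr1 k)
  have hrlow : ∀ k, ∀ x ∈ X, r k ≤ dist (z k) x :=
    fun k x hx => Metric.infDist_le_dist_of_mem hx
  -- base points
  have hbasept : ∀ k, ∃ a : EuclideanSpace ℝ (Fin n),
      dist (z k) ((F a : EuclideanSpace ℝ (Fin n))) ≤ r k + 1 + D := by
    intro k
    obtain ⟨x, hx, hdx⟩ := (Metric.infDist_lt_iff hX).1
      (show Metric.infDist (z k) X < r k + 1 from lt_add_of_pos_right _ one_pos)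
    obtain ⟨a, ha⟩ := hFclose x hx
    refine ⟨a, ?_⟩
    calc dist (z k) ((F a : EuclideanSpace ℝ (Fin n))) ≤ dist (z k) x
        + dist x ((F a : EuclideanSpace ℝ (Fin n))) := dist_triangle _ _ _
      _ ≤ r k + 1 + D := by linarith
  obtain ⟨a, haspec⟩ : ∃ a : ℕ → EuclideanSpace ℝ (Fin n),
      ∀ k, dist (z k) ((F (a k) : EuclideanSpace ℝ (Fin n))) ≤ r k + 1 + D := by
    choose a ha using hbasept
    exact ⟨a, ha⟩
  -- rescaled maps
  set g : ℕ → EuclideanSpace ℝ (Fin n) → EuclideanSpace ℝ (Fin n) :=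
    fun k x => (r k)⁻¹ • ((F (a k + (r k) • x) : EuclideanSpace ℝ (Fin n)) - z k) with hg
  set ε : ℕ → ℝ := fun k => D / r k with hε
  have hεnonneg : ∀ k, 0 ≤ ε k := fun k => div_nonneg hD0 (hr0 k).le
  have hgnorm : ∀ k x, ‖g k x‖
      = (r k)⁻¹ * dist ((F (a k + (r k) • x) : EuclideanSpace ℝ (Fin n))) (z k) := by
    intro k x
    rw [hg]
    simp only []
    rw [norm_smul, dist_eq_norm]
    congr 1
    rw [Real.norm_eq_abs, abs_of_pos (inv_pos.2 (hr0 k))]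
  have hgdist : ∀ k x y, dist (g k x) (g k y) = (r k)⁻¹
      * dist ((F (a k + (r k) • x) : EuclideanSpace ℝ (Fin n)))
             ((F (a k + (r k) • y) : EuclideanSpace ℝ (Fin n))) := by
    intro k x y
    rw [hg]
    simp only []
    rw [dist_eq_norm, ← smul_sub, norm_smul, Real.norm_eq_abs, abs_of_pos (inv_pos.2 (hr0 k))]
    congr 1
    rw [dist_eq_norm]
    abel_nf
  have hargdist : ∀ k (x y : EuclideanSpace ℝ (Fin n)),
      dist (a k + (r k) • x) (a k + (r k) • y) = r k * dist x y := by
    intro k x y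
    rw [dist_add_left, dist_smul₀, Real.norm_eq_abs, abs_of_pos (hr0 k)]
  have hdistg : ∀ k x y, |dist (g k x) (g k y) - dist x y| ≤ ε k := by
    intro k x y
    rw [hgdist]
    have h1 := hFdist (a k + (r k) • x) (a k + (r k) • y)
    rw [hargdist] at h1
    have hrne : r k ≠ 0 := (hr0 k).ne'
    have : (r k)⁻¹ * dist ((F (a k + (r k) • x) : EuclideanSpace ℝ (Fin n)))
        ((F (a k + (r k) • y) : EuclideanSpace ℝ (Fin n))) - dist x y
        = (r k)⁻¹ * (dist ((F (a k + (r k) • x) : EuclideanSpace ℝ (Fin n)))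
        ((F (a k + (r k) • y) : EuclideanSpace ℝ (Fin n))) - r k * dist x y) := by
      field_simp
    rw [this, abs_mul, abs_of_pos (inv_pos.2 (hr0 k)), hε]
    simp only []
    rw [div_eq_inv_mul]
    exact mul_le_mul_of_nonneg_left h1 (inv_pos.2 (hr0 k)).le
  have hεlim : Tendsto ε atTop (nhds 0) := by
    apply squeeze_zero hεnonneg (g := fun k : ℕ => D / ((k : ℝ) + 1))
    · intro k
      rw [hε]
      simp only []
      exact div_le_div_of_nonneg_left hD0 (by positivity) (hrk k)
    · have h := (tendsto_const_div_atTop_nhds_zero_nat D).comp (tendsto_add_atTop_nat 1)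
      have heq : (fun k : ℕ => D / ((k : ℝ) + 1)) = (fun n : ℕ => D / (n : ℝ)) ∘ (fun k => k + 1) := by
        funext k
        simp only [Function.comp_apply]
        norm_cast
      rw [heq]
      exact h
  have hlowg : ∀ k x, 1 ≤ ‖g k x‖ := by
    intro k x
    rw [hgnorm]
    have h1 : r k ≤ dist ((F (a k + (r k) • x) : EuclideanSpace ℝ (Fin n))) (z k) := by
      rw [dist_comm]
      exact hrlow k _ (F (a k + (r k) • x)).2
    calc (1 : ℝ) = (r k)⁻¹ * r k := (inv_mul_cancel₀ (hr0 k).ne').symm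
      _ ≤ _ := mul_le_mul_of_nonneg_left h1 (inv_pos.2 (hr0 k)).le
  have hbaseg : ∀ k, ‖g k 0‖ ≤ 2 + 2 * D := by
    intro k
    rw [hgnorm]
    have h1 : dist ((F (a k + (r k) • (0:EuclideanSpace ℝ (Fin n))) :
        EuclideanSpace ℝ (Fin n))) (z k) ≤ r k + 1 + D := by
      rw [smul_zero, add_zero, dist_comm]
      exact haspec k
    have h2 : (r k)⁻¹ * dist ((F (a k + (r k) • (0:EuclideanSpace ℝ (Fin n))) :
        EuclideanSpace ℝ (Fin n))) (z k) ≤ (r k)⁻¹ * (r k + 1 + D) :=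
      mul_le_mul_of_nonneg_left h1 (inv_pos.2 (hr0 k)).le
    have h3 : (r k)⁻¹ * (r k + 1 + D) ≤ 2 + 2 * D := by
      have hinv1 : (r k)⁻¹ ≤ 1 := by
        rw [inv_le_one_iff₀]; right; exact hr1 k
      have h4 : (r k)⁻¹ * (r k + 1 + D) = 1 + (r k)⁻¹ * (1 + D) := by
        have hrne : r k ≠ 0 := (hr0 k).ne'
        field_simp
        ring
      rw [h4]
      have : (r k)⁻¹ * (1 + D) ≤ 1 * (1 + D) :=
        mul_le_mul_of_nonneg_right hinv1 (by linarith)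
      linarith
    linarith
  have hεB : ∀ k, ε k ≤ 2 + 2 * D := by
    intro k
    have h1 : ε k ≤ D := div_le_self hD0 (hr1 k)
    linarith
  exact ultralimit_contradiction g ε (2 + 2 * D) hεlim hdistg hbaseg hεB hlowg

private lemma hausdorff_ne_top_iff_net {n : ℕ} (X : Set (EuclideanSpace ℝ (Fin n)))
    (hX : X.Nonempty) :
    EMetric.hausdorffEdist X (Set.univ : Set (EuclideanSpace ℝ (Fin n))) ≠ ⊤ ↔
      ∃ ε : ℝ, ∀ y : EuclideanSpace ℝ (Fin n), ∃ x ∈ X, dist y x ≤ ε := by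
  constructor
  · intro h
    set H := EMetric.hausdorffEdist X (Set.univ : Set (EuclideanSpace ℝ (Fin n))) with hH
    refine ⟨(H + 1).toReal, fun y => ?_⟩
    have h1 : EMetric.infEdist y X ≤ H := by
      have := EMetric.infEdist_le_infEdist_add_hausdorffEdist (x := y)
        (s := (Set.univ : Set (EuclideanSpace ℝ (Fin n)))) (t := X)
      rwa [EMetric.infEdist_zero_of_mem (Set.mem_univ y), zero_add,
        EMetric.hausdorffEdist_comm] at this
    have h2 : EMetric.infEdist y X < H + 1 :=
      lt_of_le_of_lt h1 (ENNReal.lt_add_right h one_ne_zero)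
    obtain ⟨x, hx, hdx⟩ := EMetric.infEdist_lt_iff.1 h2
    refine ⟨x, hx, ?_⟩
    rw [dist_edist]
    have hne : H + 1 ≠ ⊤ := ENNReal.add_ne_top.2 ⟨h, ENNReal.one_ne_top⟩
    have hedne : edist y x ≠ ⊤ := (hdx.trans_le le_top).ne
    exact (ENNReal.toReal_le_toReal hedne hne).2 hdx.le
  · rintro ⟨ε, hε⟩
    apply ne_top_of_le_ne_top (ENNReal.ofReal_ne_top (r := ε))
    apply EMetric.hausdorffEdist_le_of_mem_edist
    · intro x _
      exact ⟨x, Set.mem_univ x, by simp⟩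
    · intro y _
      obtain ⟨x, hx, hdx⟩ := hε y
      refine ⟨x, hx, ?_⟩
      rw [edist_dist]
      exact ENNReal.ofReal_le_ofReal hdx

private lemma ghDist_ne_top_of_net {n : ℕ} (X : Set (EuclideanSpace ℝ (Fin n)))
    (hnet : ∃ ε : ℝ, ∀ y : EuclideanSpace ℝ (Fin n), ∃ x ∈ X, dist y x ≤ ε) :
    ghDist X (EuclideanSpace ℝ (Fin n)) ≠ ⊤ := by
  obtain ⟨ε, hε⟩ := hnet
  set ε' : ℝ := max ε 0 with hε'
  set R : Set (↥X × EuclideanSpace ℝ (Fin n)) :=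
    {p | dist (p.1 : EuclideanSpace ℝ (Fin n)) p.2 ≤ ε'} with hR
  have hcorr : IsCorrespondence R := by
    constructor
    · intro x
      refine ⟨(x : EuclideanSpace ℝ (Fin n)), ?_⟩
      show dist (x : EuclideanSpace ℝ (Fin n)) (x : EuclideanSpace ℝ (Fin n)) ≤ ε'
      rw [dist_self]
      exact le_max_right ε 0
    · intro y
      obtain ⟨x, hx, hdx⟩ := hε y
      refine ⟨⟨x, hx⟩, ?_⟩
      show dist x y ≤ ε'
      rw [dist_comm]
      exact le_trans hdx (le_max_left ε 0)
  have hdistR : distortion R ≤ ENNReal.ofReal (2 * ε') := by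
    rw [distortion]
    apply iSup₂_le
    intro p hp
    apply iSup₂_le
    intro q hq
    apply ENNReal.ofReal_le_ofReal
    have hp' : dist (p.1 : EuclideanSpace ℝ (Fin n)) p.2 ≤ ε' := hp
    have hq' : dist (q.1 : EuclideanSpace ℝ (Fin n)) q.2 ≤ ε' := hq
    rw [Subtype.dist_eq, abs_le]
    constructor
    · have h1 := dist_triangle4 p.2 (p.1 : EuclideanSpace ℝ (Fin n))
        (q.1 : EuclideanSpace ℝ (Fin n)) q.2
      have h2 : dist p.2 (p.1 : EuclideanSpace ℝ (Fin n))
          = dist (p.1 : EuclideanSpace ℝ (Fin n)) p.2 := dist_comm _ _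
      have h3 : dist (q.1 : EuclideanSpace ℝ (Fin n)) q.2
          = dist (q.1 : EuclideanSpace ℝ (Fin n)) q.2 := rfl
      linarith
    · have h1 := dist_triangle4 (p.1 : EuclideanSpace ℝ (Fin n)) p.2 q.2
        (q.1 : EuclideanSpace ℝ (Fin n))
      have h2 : dist q.2 (q.1 : EuclideanSpace ℝ (Fin n))
          = dist (q.1 : EuclideanSpace ℝ (Fin n)) q.2 := dist_comm _ _
      linarith
  have hle : ghDist X (EuclideanSpace ℝ (Fin n)) ≤ ENNReal.ofReal (2 * ε') / 2 := by
    rw [ghDist]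
    apply ENNReal.div_le_div_right
    exact le_trans (iInf₂_le R hcorr) hdistR
  exact ne_top_of_le_ne_top
    ((ENNReal.div_lt_top ENNReal.ofReal_ne_top two_ne_zero).ne) hle

/-- for a nonempty `X ⊆ ℝⁿ`, finiteness of the Gromov–Hausdorff
distance to `ℝⁿ` is equivalent to finiteness of the Hausdorff distance, which
in turn is equivalent to `X` being an `ε`-net in `ℝⁿ` for some finite `ε`. -/
theorem ghDist_finite_iff_hausdorff_finite (n : ℕ)
    (X : Set (EuclideanSpace ℝ (Fin n))) (hX : X.Nonempty) :
    (ghDist X (EuclideanSpace ℝ (Fin n)) ≠ ⊤ ↔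
      EMetric.hausdorffEdist X (Set.univ : Set (EuclideanSpace ℝ (Fin n))) ≠ ⊤) ∧
    (EMetric.hausdorffEdist X (Set.univ : Set (EuclideanSpace ℝ (Fin n))) ≠ ⊤ ↔
      ∃ ε : ℝ, ∀ y : EuclideanSpace ℝ (Fin n), ∃ x ∈ X, dist y x ≤ ε) := by
  refine ⟨⟨fun h => ?_, fun h => ?_⟩, hausdorff_ne_top_iff_net X hX⟩
  · exact (hausdorff_ne_top_iff_net X hX).2 (net_of_ghDist X hX h)
  · exact ghDist_ne_top_of_net X ((hausdorff_ne_top_iff_net X hX).1 h)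

end
end

section
/- Let n ≥ 1, let ℝⁿ_∞ be ℝⁿ with the sup-norm metric, and let ℤⁿ_∞ be the integer lattice with the induced metric. For t ∈ [0, 1/2] let C_t = B_t(ℤⁿ_∞) be the closed t-neighborhood of ℤⁿ in ℝⁿ_∞ (with the induced metric). Then for all 0 ≤ t ≤ s ≤ 1/2 one has d_GH(C_t, C_s) = s − t; that is, the canonical Hausdorff geodesic connecting ℤⁿ_∞ and ℝⁿ_∞ is a shortest curve with respect to the Gromov–Hausdorff distance. -/
/-!
The correspondence `{(x, y) | dist x y ≤ s - t}` gives the upper bound, since `C_s` is the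
`(s - t)`-thickening of `C_t`. For the lower bound compare ultrametric diameters (the infimum
over chains of the largest step), which a correspondence changes by at most its distortion. In
`C_s` two points are joined by chains whose steps are arbitrarily small inside the cube around a
lattice point and have length `1 - 2s` between adjacent cubes, so `udiam C_s ≤ 1 - 2s`. In `C_t`
the nearest integer to the first coordinate can only change across a gap of width `1 - 2t`, so
`udiam C_t ≥ 1 - 2t`.
-/

open scoped ENNReal

noncomputable section

/-- The integer lattice inside `ℝⁿ` with the sup-norm metric (the product
metric on `Fin n → ℝ` is the sup-metric). -/
def latticeSet (n : ℕ) : Set (Fin n → ℝ) :=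
  Set.range (fun (z : Fin n → ℤ) (i : Fin n) => (z i : ℝ))


open Metric Set

variable {X Y : Type*} [MetricSpace X] [MetricSpace Y]

def ChainJoined (c : ℝ≥0∞) : X → X → Prop :=
  Relation.ReflTransGen fun a b => edist a b ≤ c

namespace ChainJoined

variable {c : ℝ≥0∞} {x y : X}

theorem symm (h : ChainJoined c x y) : ChainJoined c y x := by
  induction h with
  | refl => exact .refl
  | tail _ hab ih => exact ih.head (by rwa [edist_comm])

theorem mono {c' : ℝ≥0∞} (h : ChainJoined c x y) (hc : c ≤ c') : ChainJoined c' x y :=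
  Relation.ReflTransGen.mono (fun _ _ hab => le_trans hab hc) _ _ h

theorem trans {z : X} (hxy : ChainJoined c x y) (hyz : ChainJoined c y z) : ChainJoined c x z :=
  Relation.ReflTransGen.trans hxy hyz

theorem exists_chain (h : ChainJoined c x y) :
    ∃ (m : ℕ) (f : Fin (m + 1) → X), f 0 = x ∧ f (Fin.last m) = y ∧
      ∀ i : Fin m, edist (f i.castSucc) (f i.succ) ≤ c := by
  induction h using Relation.ReflTransGen.head_induction_on with
  | refl => exact ⟨0, fun _ => y, rfl, rfl, Fin.elim0⟩
  | head hab _ ih =>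
    obtain ⟨m, f, hf0, hfl, hf⟩ := ih
    refine ⟨m + 1, Fin.cons _ f, rfl, by rw [← Fin.succ_last, Fin.cons_succ, hfl], ?_⟩
    intro i
    cases i using Fin.cases with
    | zero => simpa [hf0] using hab
    | succ j => simpa [← Fin.succ_castSucc] using hf j

theorem of_chain {m : ℕ} (f : Fin (m + 1) → X)
    (hf : ∀ i : Fin m, edist (f i.castSucc) (f i.succ) ≤ c) :
    ChainJoined c (f 0) (f (Fin.last m)) := by
  suffices ∀ j, ChainJoined c (f 0) (f j) from this _
  intro j
  induction j using Fin.induction with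
  | zero => exact .refl
  | succ i ih => exact ih.tail (hf i)

theorem apply_eq {β : Type*} {φ : X → β} (h : ChainJoined c x y)
    (hφ : ∀ a b, edist a b ≤ c → φ a = φ b) : φ x = φ y := by
  induction h with
  | refl => rfl
  | tail _ hab ih => exact ih.trans (hφ _ _ hab)

end ChainJoined

theorem ultraDist_eq_iInf_chainJoined (x y : X) :
    ultraDist x y = ⨅ (c) (_ : ChainJoined c x y), c := by
  refine le_antisymm (le_iInf₂ fun c h => ?_) ?_
  · obtain ⟨m, f, rfl, rfl, hf⟩ := h.exists_chain
    exact iInf_le_of_le m <| iInf_le_of_le f <| iInf_le_of_le rfl <| iInf_le_of_le rfl <|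
      iSup_le hf
  · refine le_iInf fun m => le_iInf fun f => le_iInf fun hf0 => le_iInf fun hfl => ?_
    subst hf0 hfl
    exact iInf₂_le _ (.of_chain f fun i => le_iSup (fun i : Fin m => edist _ _) i)

theorem ultraDist_le_of_chainJoined {c : ℝ≥0∞} {x y : X} (h : ChainJoined c x y) :
    ultraDist x y ≤ c :=
  ultraDist_eq_iInf_chainJoined x y ▸ iInf₂_le c h

theorem le_ultraDist_iff {b : ℝ≥0∞} {x y : X} :
    b ≤ ultraDist x y ↔ ∀ c, ChainJoined c x y → b ≤ c := by
  rw [ultraDist_eq_iInf_chainJoined]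
  exact le_iInf₂_iff

theorem IsPreconnected.chainJoined {S : Set X} (hS : IsPreconnected S) {c : ℝ≥0∞} (hc : 0 < c)
    {x y : X} (hx : x ∈ S) (hy : y ∈ S) : ChainJoined c x y :=
  hS.induction₂ _
    (fun a _ => mem_nhdsWithin_of_mem_nhds <| Filter.mem_of_superset
      (eball_mem_nhds a hc) fun _ hb => .single (mem_eball'.1 hb).le)
    (fun _ _ _ _ _ _ => Relation.ReflTransGen.trans) (fun _ _ _ _ => ChainJoined.symm) hx hy

theorem chainJoined_of_isPreconnected {T K : Set X} (hKT : K ⊆ T) (hK : IsPreconnected K)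
    {c : ℝ≥0∞} (hc : 0 < c) {x y : X} (hx : x ∈ K) (hy : y ∈ K) :
    ChainJoined c (⟨x, hKT hx⟩ : T) ⟨y, hKT hy⟩ := by
  refine IsPreconnected.chainJoined (S := (Subtype.val ⁻¹' K : Set T)) ?_ hc
    (x := (⟨x, hKT hx⟩ : T)) hx hy
  rwa [← Topology.IsInducing.subtypeVal.isPreconnected_image, Subtype.image_preimage_coe,
    inter_eq_right.2 hKT]

section Correspondence

variable {R : Set (X × Y)}

theorem edist_le_edist_add_distortion {x x' : X} {y y' : Y} (h : (x, y) ∈ R)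
    (h' : (x', y') ∈ R) : edist x x' ≤ edist y y' + distortion R := by
  have hR : ENNReal.ofReal |dist x x' - dist y y'| ≤ distortion R :=
    le_iSup₂_of_le (x, y) h (le_iSup₂_of_le (x', y') h' le_rfl)
  rw [edist_dist, edist_dist]
  calc ENNReal.ofReal (dist x x') ≤ ENNReal.ofReal (dist y y' + |dist x x' - dist y y'|) :=
        ENNReal.ofReal_le_ofReal (by linarith [le_abs_self (dist x x' - dist y y')])
    _ ≤ ENNReal.ofReal (dist y y') + ENNReal.ofReal |dist x x' - dist y y'| :=
        ENNReal.ofReal_add_le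
    _ ≤ ENNReal.ofReal (dist y y') + distortion R := by gcongr

theorem ChainJoined.of_isCorrespondence (hR : IsCorrespondence R) {c : ℝ≥0∞} {x x' : X}
    {y y' : Y} (hy : (x, y) ∈ R) (hy' : (x', y') ∈ R) (h : ChainJoined c y y') :
    ChainJoined (c + distortion R) x x' := by
  induction h generalizing x' with
  | refl => exact .single ((edist_le_edist_add_distortion hy hy').trans (by simp))
  | @tail b _ _ hb ih =>
    obtain ⟨xb, hxb⟩ := hR.2 b
    exact (ih hxb).tail ((edist_le_edist_add_distortion hxb hy').trans (by gcongr))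

theorem ultraDiam_le_ultraDiam_add_distortion (hR : IsCorrespondence R) :
    ultraDiam X ≤ ultraDiam Y + distortion R := by
  refine iSup₂_le fun x x' => ?_
  obtain ⟨y, hy⟩ := hR.1 x
  obtain ⟨y', hy'⟩ := hR.1 x'
  calc ultraDist x x' ≤ ultraDist y y' + distortion R :=
        tsub_le_iff_right.1 <| le_ultraDist_iff.2 fun c h => tsub_le_iff_right.2 <|
          ultraDist_le_of_chainJoined (h.of_isCorrespondence hR hy hy')
    _ ≤ ultraDiam Y + distortion R := by
        gcongr
        exact le_iSup₂ (f := fun a b : Y => ultraDist a b) y y'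

theorem ultraDiam_sub_ultraDiam_div_two_le_ghDist :
    (ultraDiam X - ultraDiam Y) / 2 ≤ ghDist X Y := by
  refine ENNReal.div_le_div_right (le_iInf₂ fun R hR => ?_) 2
  exact tsub_le_iff_left.2 (ultraDiam_le_ultraDiam_add_distortion hR)

theorem ghDist_le_of_forall_exists_dist_le {E : Type*} [MetricSpace E] {A B : Set E} {r : ℝ}
    (hA : ∀ a ∈ A, ∃ b ∈ B, dist a b ≤ r) (hB : ∀ b ∈ B, ∃ a ∈ A, dist a b ≤ r) :
    ghDist A B ≤ ENNReal.ofReal r := by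
  let R : Set (A × B) := {p | dist (p.1 : E) p.2 ≤ r}
  have hR : IsCorrespondence R :=
    ⟨fun a => let ⟨b, hb, hab⟩ := hA a a.2; ⟨⟨b, hb⟩, hab⟩,
      fun b => let ⟨a, ha, hab⟩ := hB b b.2; ⟨⟨a, ha⟩, hab⟩⟩
  have hdis : distortion R ≤ ENNReal.ofReal (2 * r) := by
    refine iSup₂_le fun p hp => iSup₂_le fun q hq => ENNReal.ofReal_le_ofReal ?_
    have := dist_dist_dist_le (p.1 : E) q.1 p.2 q.2
    rw [Real.dist_eq] at this
    simp only [Subtype.dist_eq]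
    have hp' : dist (p.1 : E) p.2 ≤ r := hp
    have hq' : dist (q.1 : E) q.2 ≤ r := hq
    linarith
  calc ghDist A B ≤ distortion R / 2 := ENNReal.div_le_div_right (iInf₂_le R hR) 2
    _ ≤ ENNReal.ofReal (2 * r) / 2 := ENNReal.div_le_div_right hdis 2
    _ = ENNReal.ofReal r := by
        rw [← ENNReal.ofReal_ofNat 2, ← ENNReal.ofReal_div_of_pos two_pos, mul_div_cancel_left₀]
        exact two_ne_zero

end Correspondence

theorem ghDist_cthickening_cthickening_le {E : Type*} [NormedAddCommGroup E] [NormedSpace ℝ E]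
    [ProperSpace E] (A : Set E) {t s : ℝ} (ht : 0 ≤ t) (hts : t ≤ s) :
    ghDist (cthickening t A) (cthickening s A) ≤ ENNReal.ofReal (s - t) := by
  refine ghDist_le_of_forall_exists_dist_le
    (fun a ha => ⟨a, cthickening_mono hts A ha, by simpa using hts⟩) fun b hb => ?_
  rw [← sub_add_cancel s t, ← cthickening_cthickening (sub_nonneg.2 hts) ht,
    isClosed_cthickening.cthickening_eq_biUnion_closedBall (sub_nonneg.2 hts)] at hb
  obtain ⟨a, ha, hba⟩ := mem_iUnion₂.1 hb
  exact ⟨a, ha, dist_comm a b ▸ hba⟩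

section Lattice

variable {n : ℕ} {s t : ℝ}

def latticeRound (p : Fin n → ℝ) : Fin n → ℝ := fun i => (round (p i) : ℝ)

theorem latticeRound_mem (p : Fin n → ℝ) : latticeRound p ∈ latticeSet n := ⟨_, rfl⟩

theorem abs_sub_round_le_of_mem_cthickening (ht : 0 ≤ t) {p : Fin n → ℝ}
    (hp : p ∈ cthickening t (latticeSet n)) (i : Fin n) : |p i - round (p i)| ≤ t := by
  rw [mem_cthickening_iff] at hp
  refine (ENNReal.ofReal_le_ofReal_iff ht).1 (le_trans ?_ hp)
  refine le_infEDist.2 fun _ ⟨z, hz⟩ => ?_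
  rw [← hz, edist_dist]
  exact ENNReal.ofReal_le_ofReal <|
    (round_le (p i) (z i)).trans
      (Real.dist_eq (p i) (z i) ▸ dist_le_pi_dist p (fun j => (z j : ℝ)) i)

theorem dist_latticeRound_le (ht : 0 ≤ t) {p : Fin n → ℝ}
    (hp : p ∈ cthickening t (latticeSet n)) : dist p (latticeRound p) ≤ t :=
  (dist_pi_le_iff ht).2 fun i => (Real.dist_eq _ _).trans_le
    (abs_sub_round_le_of_mem_cthickening ht hp i)

theorem dist_latticeRound_latticeRound_le_one {x y : Fin n → ℝ} (h : dist x y < 1) :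
    dist (latticeRound x) (latticeRound y) ≤ 1 := by
  refine (dist_pi_le_iff zero_le_one).2 fun i => ?_
  have hx := abs_le.1 (abs_sub_round (x i))
  have hy := abs_le.1 (abs_sub_round (y i))
  have hxy : |x i - y i| < 1 := Real.dist_eq (x i) (y i) ▸ (dist_le_pi_dist x y i).trans_lt h
  have hlt : |((round (x i) - round (y i) : ℤ) : ℝ)| < 2 := by
    push_cast
    rw [abs_lt] at hxy ⊢
    constructor <;> linarith
  have hle : |round (x i) - round (y i)| ≤ 1 := by
    have : |round (x i) - round (y i)| < 2 := by exact_mod_cast hlt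
    rw [abs_lt] at this
    rw [abs_le]
    constructor <;> omega
  rw [Real.dist_eq, latticeRound, latticeRound]
  exact_mod_cast hle

theorem chainJoined_of_dist_le_one (hs0 : 0 ≤ s) (hs : s ≤ 1 / 2) {c : ℝ≥0∞} (hc : 0 < c)
    {z w : Fin n → ℝ} (hz : z ∈ latticeSet n) (hw : w ∈ latticeSet n) (hzw : dist z w ≤ 1) :
    ChainJoined (ENNReal.ofReal (1 - 2 * s) + c)
      (⟨z, self_subset_cthickening _ hz⟩ : cthickening s (latticeSet n))
      ⟨w, self_subset_cthickening _ hw⟩ := by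
  set a := AffineMap.lineMap z w s
  set b := AffineMap.lineMap z w (1 - s)
  have ha : a ∈ closedBall z s := by
    rw [mem_closedBall, dist_lineMap_left, Real.norm_of_nonneg hs0]
    exact mul_le_of_le_one_right hs0 hzw
  have hb : b ∈ closedBall w s := by
    rw [mem_closedBall, dist_lineMap_right, sub_sub_cancel, Real.norm_of_nonneg hs0]
    exact mul_le_of_le_one_right hs0 hzw
  have hab : dist a b ≤ 1 - 2 * s := by
    rw [dist_lineMap_lineMap, Real.dist_eq, abs_of_nonpos (by linarith)]
    nlinarith [dist_nonneg (x := z) (y := w)]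
  have hzs := closedBall_subset_cthickening hz s
  have hws := closedBall_subset_cthickening hw s
  refine ((chainJoined_of_isPreconnected hzs (convex_closedBall z s).isPreconnected hc
    (mem_closedBall_self hs0) ha).mono le_add_self).trans (Relation.ReflTransGen.head ?_
      ((chainJoined_of_isPreconnected hws (convex_closedBall w s).isPreconnected hc
        hb (mem_closedBall_self hs0)).mono le_add_self))
  exact le_add_right ((edist_le_ofReal (by linarith)).2 hab)

theorem chainJoined_latticeRound (hs0 : 0 ≤ s) (hs : s ≤ 1 / 2) {c : ℝ≥0∞} (hc : 0 < c)
    (x y : Fin n → ℝ) :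
    ChainJoined (ENNReal.ofReal (1 - 2 * s) + c)
      (⟨latticeRound x, self_subset_cthickening _ (latticeRound_mem x)⟩ :
        cthickening s (latticeSet n))
      ⟨latticeRound y, self_subset_cthickening _ (latticeRound_mem y)⟩ := by
  -- Connectedness of `ℝⁿ` replaces an explicit lattice path: points at distance `< 1` round to
  -- lattice points at distance `≤ 1`.
  let ρ (x : Fin n → ℝ) : cthickening s (latticeSet n) :=
    ⟨latticeRound x, self_subset_cthickening _ (latticeRound_mem x)⟩
  refine PreconnectedSpace.induction₂' (fun x y => ChainJoined _ (ρ x) (ρ y)) (fun x => ?_)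
    ⟨fun _ _ _ => ChainJoined.trans⟩ x y
  filter_upwards [ball_mem_nhds x one_pos] with y hy
  have h := dist_latticeRound_latticeRound_le_one (mem_ball'.1 hy)
  have hxy := chainJoined_of_dist_le_one hs0 hs hc (latticeRound_mem x) (latticeRound_mem y) h
  exact ⟨hxy, hxy.symm⟩

theorem chainJoined_cthickening_latticeSet (hs0 : 0 ≤ s) (hs : s ≤ 1 / 2) {c : ℝ≥0∞}
    (hc : 0 < c) (P Q : cthickening s (latticeSet n)) :
    ChainJoined (ENNReal.ofReal (1 - 2 * s) + c) P Q := by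
  have toRound (p : Fin n → ℝ) (hp : p ∈ cthickening s (latticeSet n)) :
      ChainJoined (ENNReal.ofReal (1 - 2 * s) + c) (⟨p, hp⟩ : cthickening s (latticeSet n))
        ⟨latticeRound p, self_subset_cthickening _ (latticeRound_mem p)⟩ :=
    (chainJoined_of_isPreconnected (closedBall_subset_cthickening (latticeRound_mem p) s)
      (convex_closedBall _ _).isPreconnected hc (mem_closedBall.2 (dist_latticeRound_le hs0 hp))
      (mem_closedBall_self hs0)).mono le_add_self
  exact ((toRound P P.2).trans (chainJoined_latticeRound hs0 hs hc (P : Fin n → ℝ) Q)).trans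
    (toRound Q Q.2).symm

theorem ultraDiam_cthickening_latticeSet_le (hs0 : 0 ≤ s) (hs : s ≤ 1 / 2) :
    ultraDiam (cthickening s (latticeSet n)) ≤ ENNReal.ofReal (1 - 2 * s) :=
  iSup₂_le fun P Q => ENNReal.le_of_forall_pos_le_add fun _ hε _ => ultraDist_le_of_chainJoined
    (chainJoined_cthickening_latticeSet hs0 hs (ENNReal.coe_pos.2 hε) P Q)

theorem one_sub_two_mul_le_dist_of_round_ne (ht : 0 ≤ t) {p q : Fin n → ℝ}
    (hp : p ∈ cthickening t (latticeSet n)) (hq : q ∈ cthickening t (latticeSet n)) {i : Fin n}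
    (h : round (p i) ≠ round (q i)) :
    1 - 2 * t ≤ dist p q := by
  have h1 : (1 : ℝ) ≤ |(round (p i) : ℝ) - round (q i)| := by
    exact_mod_cast Int.one_le_abs (sub_ne_zero.2 h)
  have hp' := abs_sub_round_le_of_mem_cthickening ht hp i
  have hq' := abs_sub_round_le_of_mem_cthickening ht hq i
  have hpq : |p i - q i| ≤ dist p q := Real.dist_eq (p i) (q i) ▸ dist_le_pi_dist p q i
  have := abs_sub_le (round (p i) : ℝ) (p i) (round (q i))
  have := abs_sub_le (p i) (q i) (round (q i) : ℝ)
  rw [abs_sub_comm] at hp'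
  linarith

theorem one_sub_two_mul_le_ultraDiam_cthickening_latticeSet (hn : 1 ≤ n) (ht : 0 ≤ t) :
    ENNReal.ofReal (1 - 2 * t) ≤ ultraDiam (cthickening t (latticeSet n)) := by
  let i : Fin n := ⟨0, hn⟩
  have h0 : (0 : Fin n → ℝ) ∈ latticeSet n := ⟨0, by ext; simp⟩
  have h1 : (Pi.single i 1 : Fin n → ℝ) ∈ latticeSet n :=
    ⟨Pi.single i 1, by ext j; by_cases hj : j = i <;> simp [hj]⟩
  refine le_iSup₂_of_le (⟨0, self_subset_cthickening _ h0⟩ : cthickening t (latticeSet n))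
    ⟨_, self_subset_cthickening _ h1⟩ (le_ultraDist_iff.2 fun c hc => ?_)
  by_contra! hlt
  have h01 := hc.apply_eq (φ := fun p : cthickening t (latticeSet n) => round ((p : Fin n → ℝ) i))
    fun a b hab => by
      by_contra hne
      exact (one_sub_two_mul_le_dist_of_round_ne ht a.2 b.2 hne).not_gt
        (edist_lt_ofReal.1 (hab.trans_lt hlt))
  simp at h01

end Lattice

/-- for `n ≥ 1` and `0 ≤ t ≤ s ≤ 1/2`, the closed neighborhoods
`C_t = B_t(ℤⁿ_∞)` in `ℝⁿ_∞` (induced metrics) satisfy `d_GH(C_t, C_s) = s − t`;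
i.e. the canonical Hausdorff geodesic joining `ℤⁿ_∞` and `ℝⁿ_∞` is a shortest
curve for the Gromov–Hausdorff distance. -/
theorem canonical_geodesic_lattice_GH (n : ℕ) (hn : 1 ≤ n)
    (t s : ℝ) (h0 : 0 ≤ t) (hts : t ≤ s) (hs : s ≤ 1 / 2) :
    ghDist (Metric.cthickening t (latticeSet n)) (Metric.cthickening s (latticeSet n)) =
      ENNReal.ofReal (s - t) := by
  refine le_antisymm (ghDist_cthickening_cthickening_le _ h0 hts) ?_
  calc ENNReal.ofReal (s - t)
      = (ENNReal.ofReal (1 - 2 * t) - ENNReal.ofReal (1 - 2 * s)) / 2 := by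
        rw [← ENNReal.ofReal_sub _ (by linarith), ← ENNReal.ofReal_ofNat 2,
          ← ENNReal.ofReal_div_of_pos two_pos]
        congr 1
        ring
    _ ≤ (ultraDiam (cthickening t (latticeSet n)) -
          ultraDiam (cthickening s (latticeSet n))) / 2 := by
        gcongr
        · exact one_sub_two_mul_le_ultraDiam_cthickening_latticeSet hn h0
        · exact ultraDiam_cthickening_latticeSet_le (h0.trans hts) hs
    _ ≤ _ := ultraDiam_sub_ultraDiam_div_two_le_ghDist

end
end
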